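/- arXiv:0912.1316 — 5 statements merged into one kernel-verified Lean document; each statement's English description precedes it below -/
import Mathlib

section
/- Let F : [0,T) → ℝ be twice continuously differentiable with F(0) = 0, F'(0) = C₀ > 0, F' > 0 on [0,T), and F''(t) ≥ D F(t)² for all t, where D > 0. Then F'(t) ≥ sqrt((2D/3) F(t)³ + C₀²) for all t ∈ [0,T). -/
open Set Real

theorem stmt_0 (T C₀ D : ℝ) (hT : 0 < T) (hC₀ : 0 < C₀) (hD : 0 < D)
    (F F' F'' : ℝ → ℝ)
    (hF : ∀ t ∈ Ico (0:ℝ) T, HasDerivAt F (F' t) t)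
    (hF' : ∀ t ∈ Ico (0:ℝ) T, HasDerivAt F' (F'' t) t)
    (hF''cont : ContinuousOn F'' (Ico (0:ℝ) T))
    (hF0 : F 0 = 0) (hF'0 : F' 0 = C₀)
    (hF'pos : ∀ t ∈ Ico (0:ℝ) T, 0 < F' t)
    (hF''ge : ∀ t ∈ Ico (0:ℝ) T, F'' t ≥ D * (F t) ^ 2) :
    ∀ t ∈ Ico (0:ℝ) T, F' t ≥ Real.sqrt ((2 * D / 3) * (F t) ^ 3 + C₀ ^ 2) := by
  intro t ht
  obtain ⟨ht0, htT⟩ := ht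
  set G : ℝ → ℝ := fun s => F' s ^ 2 - (2 * D / 3) * F s ^ 3 - C₀ ^ 2 with hGdef
  have hsub : Icc (0:ℝ) t ⊆ Ico 0 T := fun s hs => ⟨hs.1, lt_of_le_of_lt hs.2 htT⟩
  have hGderiv : ∀ s ∈ Ico (0:ℝ) T,
      HasDerivAt G (2 * F' s * (F'' s - D * F s ^ 2)) s := by
    intro s hs
    have h1 := (hF' s hs).fun_pow 2
    have h2 := ((hF s hs).fun_pow 3).const_mul (2 * D / 3)
    have h3 := (h1.fun_sub h2).sub_const (C₀ ^ 2)
    refine h3.congr_deriv ?_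
    push_cast
    ring
  have hmono : MonotoneOn G (Icc (0:ℝ) t) := by
    apply monotoneOn_of_deriv_nonneg (convex_Icc 0 t)
    · intro s hs
      exact ((hGderiv s (hsub hs)).continuousAt).continuousWithinAt
    · intro s hs
      rw [interior_Icc] at hs
      exact ((hGderiv s (hsub (Ioo_subset_Icc_self hs))).differentiableAt).differentiableWithinAt
    · intro s hs
      rw [interior_Icc] at hs
      have hs' := hsub (Ioo_subset_Icc_self hs)
      rw [(hGderiv s hs').deriv]
      have h1 : 0 ≤ 2 * F' s := by linarith [hF'pos s hs']
      have h2 : 0 ≤ F'' s - D * F s ^ 2 := by linarith [hF''ge s hs']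
      positivity
  have hG0 : G 0 = 0 := by simp [hGdef, hF0, hF'0]
  have hGt : 0 ≤ G t := by
    have := hmono (left_mem_Icc.mpr ht0) (right_mem_Icc.mpr ht0) ht0
    rw [hG0] at this; exact this
  have hle : (2 * D / 3) * F t ^ 3 + C₀ ^ 2 ≤ F' t ^ 2 := by
    simp only [hGdef] at hGt; linarith
  calc Real.sqrt ((2 * D / 3) * F t ^ 3 + C₀ ^ 2)
      ≤ Real.sqrt (F' t ^ 2) := Real.sqrt_le_sqrt hle
    _ = F' t := Real.sqrt_sq (hF'pos t ⟨ht0, htT⟩).le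
end

section
/- Suppose F : [0,∞) → ℝ is C¹, strictly increasing, F(0) = 0, and F'(t) ≥ sqrt((2D/3) F(t)³ + C) for all t, with constants C, D > 0. Let I(x) = ∫₀ˣ dy / sqrt(y³ + 1) and J = (3C/(2D))^{1/3}. Then I(F(t)/J) ≥ sqrt(C) t / J for all t ≥ 0. -/
open Set Real

theorem stmt_1 (C D : ℝ) (hC : 0 < C) (hD : 0 < D)
    (F F' : ℝ → ℝ)
    (hF : ∀ t ∈ Ici (0:ℝ), HasDerivAt F (F' t) t)
    (hF'cont : ContinuousOn F' (Ici (0:ℝ)))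
    (hmono : StrictMonoOn F (Ici (0:ℝ)))
    (hF0 : F 0 = 0)
    (hineq : ∀ t ∈ Ici (0:ℝ), F' t ≥ Real.sqrt ((2 * D / 3) * (F t) ^ 3 + C)) :
    ∀ t ∈ Ici (0:ℝ),
      (∫ y in (0:ℝ)..(F t / (3 * C / (2 * D)) ^ ((1:ℝ)/3)),
          1 / Real.sqrt (y ^ 3 + 1))
        ≥ Real.sqrt C * t / (3 * C / (2 * D)) ^ ((1:ℝ)/3) := by
  set j : ℝ := (3 * C / (2 * D)) ^ ((1:ℝ)/3) with hjdef
  have hbase : (0:ℝ) < 3 * C / (2 * D) := by positivity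
  have hj : 0 < j := Real.rpow_pos_of_pos hbase _
  have hj3 : j ^ 3 = 3 * C / (2 * D) := by
    rw [hjdef, ← Real.rpow_natCast (_ ^ ((1:ℝ)/3)) 3, ← Real.rpow_mul hbase.le]
    norm_num
  set f : ℝ → ℝ := fun y => 1 / Real.sqrt (y ^ 3 + 1) with hfdef
  have hfc : ContinuousOn f (Ioi (-1:ℝ)) := by
    intro y hy
    have hy1 : (0:ℝ) < y ^ 3 + 1 := by
      have : (-1:ℝ) < y := hy
      nlinarith [sq_nonneg (y + 1), sq_nonneg (y - 1)]
    have hs : Real.sqrt (y ^ 3 + 1) ≠ 0 := ne_of_gt (Real.sqrt_pos.mpr hy1)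
    exact (ContinuousAt.continuousWithinAt (by
      exact (continuousAt_const.div
        ((Real.continuous_sqrt.comp (by continuity)).continuousAt) hs)))
  have hFnn : ∀ t ∈ Ici (0:ℝ), 0 ≤ F t := by
    intro t ht
    rcases eq_or_lt_of_le (show (0:ℝ) ≤ t from ht) with h | h
    · simp [← h, hF0]
    · have := hmono (self_mem_Ici) ht h
      rw [hF0] at this; exact this.le
  -- derivative of the primitive
  have hg : ∀ x : ℝ, 0 ≤ x →
      HasDerivAt (fun u => ∫ y in (0:ℝ)..u, f y) (f x) x := by
    intro x hx
    have hmem : x ∈ Ioi (-1:ℝ) := lt_of_lt_of_le (by norm_num) hx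
    have hsub : uIcc (0:ℝ) x ⊆ Ioi (-1:ℝ) := by
      rw [uIcc_of_le hx]
      intro y hy
      exact lt_of_lt_of_le (by norm_num) hy.1
    have hint : IntervalIntegrable f MeasureTheory.volume 0 x :=
      (hfc.mono hsub).intervalIntegrable
    exact intervalIntegral.integral_hasDerivAt_right hint
      (hfc.stronglyMeasurableAtFilter isOpen_Ioi x hmem)
      (hfc.continuousAt (isOpen_Ioi.mem_nhds hmem))
  set φ : ℝ → ℝ := fun s => (∫ y in (0:ℝ)..(F s / j), f y) - Real.sqrt C * s / j
    with hφdef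
  -- derivative of φ at points of Ici 0
  have hφderiv : ∀ t ∈ Ici (0:ℝ),
      HasDerivAt φ (f (F t / j) * (F' t / j) - Real.sqrt C / j) t := by
    intro t ht
    have hu : 0 ≤ F t / j := div_nonneg (hFnn t ht) hj.le
    have h1 : HasDerivAt (fun s => F s / j) (F' t / j) t := (hF t ht).div_const j
    have h2 : HasDerivAt (fun s => ∫ y in (0:ℝ)..(F s / j), f y)
        (f (F t / j) * (F' t / j)) t := by have := (hg _ hu).comp t h1; exact this
    have h3 : HasDerivAt (fun s => Real.sqrt C * s / j) (Real.sqrt C / j) t := by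
      have := ((hasDerivAt_id t).const_mul (Real.sqrt C)).div_const j
      simpa using this
    exact h2.sub h3
  have hderivnn : ∀ t ∈ Ici (0:ℝ),
      0 ≤ f (F t / j) * (F' t / j) - Real.sqrt C / j := by
    intro t ht
    set u : ℝ := F t / j with hudef
    have hu : 0 ≤ u := div_nonneg (hFnn t ht) hj.le
    have hu1 : (0:ℝ) < u ^ 3 + 1 := by positivity
    have hs : 0 < Real.sqrt (u ^ 3 + 1) := Real.sqrt_pos.mpr hu1
    have heq : (2 * D / 3) * (F t) ^ 3 + C = C * (u ^ 3 + 1) := by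
      rw [hudef, div_pow, hj3]
      field_simp
    have h2 : Real.sqrt C * Real.sqrt (u ^ 3 + 1) ≤ F' t := by
      rw [← Real.sqrt_mul hC.le]
      have := hineq t ht
      rw [heq] at this
      exact this
    have hfu : f u = 1 / Real.sqrt (u ^ 3 + 1) := rfl
    have key : Real.sqrt C ≤ f u * F' t := by
      rw [hfu, one_div, inv_mul_eq_div, le_div_iff₀ hs]
      linarith
    have hd : Real.sqrt C / j ≤ f u * F' t / j := by gcongr
    rw [mul_div_assoc] at hd
    linarith
  -- monotonicity
  have hcont : ContinuousOn φ (Ici (0:ℝ)) := fun t ht =>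
    ((hφderiv t ht).continuousAt).continuousWithinAt
  have hmonoφ : MonotoneOn φ (Ici (0:ℝ)) := by
    apply monotoneOn_of_deriv_nonneg (convex_Ici 0) hcont
    · intro t ht
      rw [interior_Ici] at ht
      exact (hφderiv t (mem_Ici.mpr (le_of_lt (mem_Ioi.mp ht)))).differentiableAt.differentiableWithinAt
    · intro t ht
      rw [interior_Ici] at ht
      rw [(hφderiv t (mem_Ici.mpr (le_of_lt (mem_Ioi.mp ht)))).deriv]
      exact hderivnn t (mem_Ici.mpr (le_of_lt (mem_Ioi.mp ht)))
  intro t ht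
  have h0 : φ 0 = 0 := by
    simp [hφdef, hF0]
  have := hmonoφ self_mem_Ici ht ht
  rw [h0] at this
  have hφt : 0 ≤ (∫ y in (0:ℝ)..(F t / j), f y) - Real.sqrt C * t / j := this
  simpa [hfdef, ge_iff_le, sub_nonneg] using hφt
end

section
/- A C¹ function F : [0,∞) → ℝ with F(0) = 0 satisfying F'(t) ≥ sqrt((2D/3) F(t)³ + C) for all t in its domain of existence, with C, D > 0, cannot be globally defined: it blows up (tends to +∞) no later than T* = (3C/(2D))^{1/3} · I_∞ / sqrt(C), where I_∞ = ∫₀^∞ dy/sqrt(y³+1). -/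
open Set Real MeasureTheory intervalIntegral

/-- A C¹ function `F` with `F 0 = 0` satisfying `F' t ≥ √((2D/3) F(t)³ + C)`
cannot exist (remain finite and differentiable) on any interval `[0, T]` with
`T > T* = (3C/(2D))^(1/3) · I_∞ / √C`, where `I_∞ = ∫₀^∞ dy/√(y³+1)`. -/
theorem stmt_2 (C D : ℝ) (hC : 0 < C) (hD : 0 < D)
    (T : ℝ)
    (hT : T > (3 * C / (2 * D)) ^ ((1:ℝ)/3)
            * (∫ y in Ioi (0:ℝ), 1 / Real.sqrt (y ^ 3 + 1)) / Real.sqrt C) :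
    ¬ ∃ (F F' : ℝ → ℝ),
        F 0 = 0 ∧
        (∀ t ∈ Icc (0:ℝ) T, HasDerivAt F (F' t) t) ∧
        ContinuousOn F' (Icc (0:ℝ) T) ∧
        (∀ t ∈ Icc (0:ℝ) T, F' t ≥ Real.sqrt ((2 * D / 3) * (F t) ^ 3 + C)) := by
  rintro ⟨F, F', hF0, hder, hFcont', hineq⟩
  set a : ℝ := (3 * C / (2 * D)) ^ ((1:ℝ)/3) with ha_def
  have ha : 0 < a := rpow_pos_of_pos (by positivity) _
  have ha3 : (2 * D / 3) * a ^ 3 = C := by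
    have h1 : a ^ 3 = 3 * C / (2 * D) := by
      rw [ha_def, ← rpow_natCast _ 3, ← rpow_mul (by positivity)]
      norm_num
    rw [h1]; field_simp
  set g : ℝ → ℝ := fun x => (Real.sqrt ((2 * D / 3) * x ^ 3 + C))⁻¹ with hg_def
  have hgpos : ∀ x : ℝ, 0 ≤ x → 0 < (2 * D / 3) * x ^ 3 + C := fun x hx => by positivity
  have hgnonneg : ∀ x : ℝ, 0 ≤ g x := fun x => by
    simp only [hg_def]; positivity
  have hgcont : ∀ x : ℝ, 0 ≤ x → ContinuousAt g x := by
    intro x hx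
    apply ContinuousAt.inv₀
    · exact (Real.continuous_sqrt.comp (by continuity)).continuousAt
    · exact (Real.sqrt_pos.mpr (hgpos x hx)).ne'
  have hgm : Measurable g := by
    apply Measurable.inv
    exact (Real.continuous_sqrt.comp (by continuity)).measurable
  -- F is nonnegative on [0,T]
  have hFcont : ContinuousOn F (Icc 0 T) := fun t ht =>
    (hder t ht).continuousAt.continuousWithinAt
  have hFmono : MonotoneOn F (Icc 0 T) := by
    apply monotoneOn_of_hasDerivWithinAt_nonneg (convex_Icc 0 T) hFcont
      (fun t ht => ((hder t (interior_subset ht)).hasDerivWithinAt))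
    intro t ht
    exact le_trans (Real.sqrt_nonneg _) (hineq t (interior_subset ht))
  -- T > 0
  have hI : 0 ≤ ∫ y in Ioi (0:ℝ), 1 / Real.sqrt (y ^ 3 + 1) :=
    setIntegral_nonneg measurableSet_Ioi (fun y _ => by positivity)
  have hT0 : 0 < T :=
    lt_of_le_of_lt (div_nonneg (mul_nonneg ha.le hI) (Real.sqrt_nonneg C)) hT
  have hFnn : ∀ t ∈ Icc (0:ℝ) T, 0 ≤ F t := by
    intro t ht
    have := hFmono (left_mem_Icc.mpr hT0.le) ht ht.1
    rwa [hF0] at this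
  -- integrability of g on Ioi 0
  have hgint : IntegrableOn g (Ioi (0:ℝ)) := by
    have h1 : IntegrableOn g (Ioc (0:ℝ) 1) := by
      apply IntegrableOn.mono_set _ Ioc_subset_Icc_self
      apply ContinuousOn.integrableOn_Icc
      exact fun x hx => (hgcont x hx.1).continuousWithinAt
    have h2 : IntegrableOn (fun x : ℝ => (Real.sqrt (2 * D / 3))⁻¹ * x ^ (-(3/2) : ℝ))
        (Ioi (1:ℝ)) :=
      (integrableOn_Ioi_rpow_of_lt (by norm_num) one_pos).const_mul _
    have h3 : IntegrableOn g (Ioi (1:ℝ)) := by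
      apply h2.mono' (hgm.aestronglyMeasurable.restrict)
      filter_upwards [ae_restrict_mem measurableSet_Ioi] with x hx
      have hx1 : (1:ℝ) ≤ x := le_of_lt hx
      have hx0 : (0:ℝ) ≤ x := by linarith
      rw [Real.norm_eq_abs, abs_of_nonneg (hgnonneg x)]
      have hsq : Real.sqrt ((2 * D / 3) * x ^ 3) ≤ Real.sqrt ((2 * D / 3) * x ^ 3 + C) :=
        Real.sqrt_le_sqrt (by linarith)
      have hpos : 0 < Real.sqrt ((2 * D / 3) * x ^ 3) := by
        apply Real.sqrt_pos.mpr; positivity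
      have h4 : g x ≤ (Real.sqrt ((2 * D / 3) * x ^ 3))⁻¹ := by
        simp only [hg_def]
        exact inv_anti₀ hpos hsq
      refine h4.trans (le_of_eq ?_)
      have hx32 : Real.sqrt (x ^ 3) = x ^ ((3:ℝ)/2) := by
        rw [Real.sqrt_eq_rpow, ← Real.rpow_natCast x 3, ← Real.rpow_mul hx0]
        norm_num
      rw [Real.sqrt_mul (by positivity) (x ^ 3), mul_inv, Real.rpow_neg hx0, hx32]
    have := h1.union h3
    rwa [Ioc_union_Ioi_eq_Ioi (by norm_num : (0:ℝ) ≤ 1)] at this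
  -- change of variables
  have key : ∫ x in Ioi (0:ℝ), g x
      = a * (∫ y in Ioi (0:ℝ), 1 / Real.sqrt (y ^ 3 + 1)) / Real.sqrt C := by
    have hcv := MeasureTheory.integral_comp_mul_left_Ioi g 0 ha
    rw [mul_zero] at hcv
    have heq : ∀ y ∈ Ioi (0:ℝ), g (a * y)
        = (Real.sqrt C)⁻¹ * (1 / Real.sqrt (y ^ 3 + 1)) := by
      intro y hy
      have h1 : (2 * D / 3) * (a * y) ^ 3 + C = C * (y ^ 3 + 1) := by
        linear_combination y ^ 3 * ha3
      simp only [hg_def, h1, Real.sqrt_mul hC.le, mul_inv, one_div]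
    rw [setIntegral_congr_fun measurableSet_Ioi heq, MeasureTheory.integral_const_mul,
      smul_eq_mul] at hcv
    have h6 : ∫ x in Ioi (0:ℝ), g x
        = a * ((Real.sqrt C)⁻¹ * ∫ y in Ioi (0:ℝ), 1 / Real.sqrt (y ^ 3 + 1)) := by
      rw [hcv, ← mul_assoc, mul_inv_cancel₀ ha.ne', one_mul]
    rw [h6]; ring
  -- derivative of G := ∫ 0..F t, g
  set G : ℝ → ℝ := fun s => ∫ x in (0:ℝ)..F s, g x with hG_def
  have hGder : ∀ t ∈ Icc (0:ℝ) T, HasDerivAt G (g (F t) * F' t) t := by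
    intro t ht
    have hFt : 0 ≤ F t := hFnn t ht
    have hint : IntervalIntegrable g volume 0 (F t) := by
      apply ContinuousOn.intervalIntegrable
      intro x hx
      rw [uIcc_of_le hFt] at hx
      exact (hgcont x hx.1).continuousWithinAt
    have hmeas : StronglyMeasurableAtFilter g (nhds (F t)) :=
      hgm.stronglyMeasurable.stronglyMeasurableAtFilter
    have H := intervalIntegral.integral_hasDerivAt_right hint hmeas (hgcont _ hFt)
    exact H.comp t (hder t ht)
  -- G t - t is monotone
  have hmono : MonotoneOn (fun t => G t - t) (Icc 0 T) := by
    apply monotoneOn_of_hasDerivWithinAt_nonneg (convex_Icc 0 T)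
      (f' := fun t => g (F t) * F' t - 1)
    · intro t ht
      exact ((hGder t ht).sub (hasDerivAt_id t)).continuousAt.continuousWithinAt
    · intro t ht
      exact (((hGder t (interior_subset ht)).sub (hasDerivAt_id t))).hasDerivWithinAt
    · intro t ht
      have ht' : t ∈ Icc (0:ℝ) T := interior_subset ht
      have hs : 0 < Real.sqrt ((2 * D / 3) * (F t) ^ 3 + C) :=
        Real.sqrt_pos.mpr (hgpos _ (hFnn t ht'))
      have : (1:ℝ) ≤ g (F t) * F' t := by
        have h5 : g (F t) * Real.sqrt ((2 * D / 3) * (F t) ^ 3 + C) = 1 := by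
          simp only [hg_def]
          exact inv_mul_cancel₀ hs.ne'
        calc (1:ℝ) = g (F t) * Real.sqrt ((2 * D / 3) * (F t) ^ 3 + C) := h5.symm
          _ ≤ g (F t) * F' t := by
              apply mul_le_mul_of_nonneg_left (hineq t ht') (hgnonneg _)
      linarith
  have hG0 : G 0 = 0 := by
    simp only [hG_def, hF0, intervalIntegral.integral_same]
  have hTle : T ≤ G T := by
    have := hmono (left_mem_Icc.mpr hT0.le) (right_mem_Icc.mpr hT0.le) hT0.le
    simp only [hG0] at this
    linarith
  have hGT : G T ≤ ∫ x in Ioi (0:ℝ), g x := by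
    have hFT : 0 ≤ F T := hFnn T (right_mem_Icc.mpr hT0.le)
    simp only [hG_def]
    rw [intervalIntegral.integral_of_le hFT]
    apply setIntegral_mono_set hgint
    · exact Filter.Eventually.of_forall (fun x => hgnonneg x)
    · exact Filter.Eventually.of_forall Ioc_subset_Ioi_self
  rw [key] at hGT
  linarith
end

section
/- Let E(t) = ∫_Ω (u² + 2|∇ψ|²) dx dz - 2β ∫_{Ω_x} ψ(x,0,t)² dx. If (u, ψ) is a smooth solution of u_t = 2uψ_z, -Δψ_t = (u²)_z on Ω = Ω_x × (0,b) with ψ = 0 on ∂Ω∖Γ and ψ_z + βψ = 0 on Γ = {z = 0}, and u vanishes on {z=0} ∪ {z=b}, then dE/dt = 0. -/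
open Set Real

/-- Partial derivatives of a function of three real variables. -/
noncomputable def dx1 (f : ℝ → ℝ → ℝ → ℝ) (x₁ x₂ z : ℝ) : ℝ :=
  deriv (fun s => f s x₂ z) x₁

noncomputable def dx2 (f : ℝ → ℝ → ℝ → ℝ) (x₁ x₂ z : ℝ) : ℝ :=
  deriv (fun s => f x₁ s z) x₂

noncomputable def dz (f : ℝ → ℝ → ℝ → ℝ) (x₁ x₂ z : ℝ) : ℝ :=
  deriv (fun s => f x₁ x₂ s) z


open Set Real MeasureTheory intervalIntegral Metric

namespace E3D

abbrev X := ℝ × ℝ × ℝ × ℝ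

noncomputable def pd (v : X) (F : X → ℝ) : X → ℝ := fun p => fderiv ℝ F p v

def e1 : X := (1,0,0,0)
def e2 : X := (0,1,0,0)
def e3 : X := (0,0,1,0)
def e4 : X := (0,0,0,1)

lemma pd_smooth {F : X → ℝ} (hF : ContDiff ℝ (⊤ : ℕ∞) F) (v : X) : ContDiff ℝ (⊤ : ℕ∞) (pd v F) :=
  (hF.fderiv_right (by simp)).clm_apply contDiff_const

lemma hds1 {F : X → ℝ} (hF : ContDiff ℝ (⊤ : ℕ∞) F) (t x y z : ℝ) :
    HasDerivAt (fun s => F (s, x, y, z)) (pd e1 F (t,x,y,z)) t := by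
  have hline : HasDerivAt (fun s : ℝ => ((s, x, y, z) : X)) e1 t :=
    (hasDerivAt_id t).prodMk ((hasDerivAt_const t x).prodMk
      ((hasDerivAt_const t y).prodMk (hasDerivAt_const t z)))
  exact (hF.differentiable (by simp) _).hasFDerivAt.comp_hasDerivAt t hline

lemma hds2 {F : X → ℝ} (hF : ContDiff ℝ (⊤ : ℕ∞) F) (t x y z : ℝ) :
    HasDerivAt (fun s => F (t, s, y, z)) (pd e2 F (t,x,y,z)) x := by
  have hline : HasDerivAt (fun s : ℝ => ((t, s, y, z) : X)) e2 x :=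
    (hasDerivAt_const x t).prodMk ((hasDerivAt_id x).prodMk
      ((hasDerivAt_const x y).prodMk (hasDerivAt_const x z)))
  exact (hF.differentiable (by simp) _).hasFDerivAt.comp_hasDerivAt x hline

lemma hds3 {F : X → ℝ} (hF : ContDiff ℝ (⊤ : ℕ∞) F) (t x y z : ℝ) :
    HasDerivAt (fun s => F (t, x, s, z)) (pd e3 F (t,x,y,z)) y := by
  have hline : HasDerivAt (fun s : ℝ => ((t, x, s, z) : X)) e3 y :=
    (hasDerivAt_const y t).prodMk ((hasDerivAt_const y x).prodMk
      ((hasDerivAt_id y).prodMk (hasDerivAt_const y z)))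
  exact (hF.differentiable (by simp) _).hasFDerivAt.comp_hasDerivAt y hline

lemma hds4 {F : X → ℝ} (hF : ContDiff ℝ (⊤ : ℕ∞) F) (t x y z : ℝ) :
    HasDerivAt (fun s => F (t, x, y, s)) (pd e4 F (t,x,y,z)) z := by
  have hline : HasDerivAt (fun s : ℝ => ((t, x, y, s) : X)) e4 z :=
    (hasDerivAt_const z t).prodMk ((hasDerivAt_const z x).prodMk
      ((hasDerivAt_const z y).prodMk (hasDerivAt_id z)))
  exact (hF.differentiable (by simp) _).hasFDerivAt.comp_hasDerivAt z hline

lemma pd_comm {F : X → ℝ} (hF : ContDiff ℝ (⊤ : ℕ∞) F) (v w : X) :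
    pd v (pd w F) = pd w (pd v F) := by
  have hd : ContDiff ℝ (⊤ : ℕ∞) (fderiv ℝ F) := hF.fderiv_right (by simp)
  have key : ∀ v w : X, ∀ p : X, pd v (pd w F) p = fderiv ℝ (fderiv ℝ F) p v w := by
    intro v w p
    have h := fderiv_clm_apply (c := fderiv ℝ F) (u := fun _ : X => w)
      ((hd.differentiable (by simp)) p) (differentiableAt_const w)
    have h2 : fderiv ℝ (pd w F) p =
        (fderiv ℝ F p).comp (fderiv ℝ (fun _ : X => w) p)
          + (fderiv ℝ (fderiv ℝ F) p).flip w := h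
    simp only [pd]
    rw [h2]
    simp
  funext p
  rw [key v w p, key w v p]
  exact (hF.contDiffAt.isSymmSndFDerivAt (by rw [minSmoothness_of_isRCLikeNormedField]; exact WithTop.coe_le_coe.mpr (le_top : (2 : ℕ∞) ≤ ⊤))).eq v w



/-- Parametric continuity of a single interval integral. -/
lemma contP1 {Y : Type*} [TopologicalSpace Y] [FirstCountableTopology Y] [LocallyCompactSpace Y]
    {F : Y → ℝ → ℝ} (hF : Continuous fun p : Y × ℝ => F p.1 p.2) (c : ℝ) :
    Continuous fun x => ∫ y in (0:ℝ)..c, F x y :=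
  continuous_parametric_intervalIntegral_of_continuous' (μ := volume) hF 0 c

lemma contP2 {Y : Type*} [TopologicalSpace Y] [FirstCountableTopology Y] [LocallyCompactSpace Y]
    {F : Y → ℝ → ℝ → ℝ} (hF : Continuous fun p : (Y × ℝ) × ℝ => F p.1.1 p.1.2 p.2) (c d : ℝ) :
    Continuous fun x => ∫ y in (0:ℝ)..c, ∫ z in (0:ℝ)..d, F x y z :=
  contP1 (F := fun x y => ∫ z in (0:ℝ)..d, F x y z)
    (contP1 (Y := Y × ℝ) (F := fun q z => F q.1 q.2 z) hF d) c

/-- Leibniz rule: differentiation under an interval integral, continuous data. -/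
lemma leibniz1 {F F' : ℝ → ℝ → ℝ} (hF : Continuous fun p : ℝ × ℝ => F p.1 p.2)
    (hF' : Continuous fun p : ℝ × ℝ => F' p.1 p.2)
    (hd : ∀ t x, HasDerivAt (fun s => F s x) (F' t x) t) (c t₀ : ℝ) :
    HasDerivAt (fun t => ∫ x in (0:ℝ)..c, F t x) (∫ x in (0:ℝ)..c, F' t₀ x) t₀ := by
  have hK : IsCompact (Icc (t₀ - 1) (t₀ + 1) ×ˢ uIcc (0:ℝ) c) :=
    isCompact_Icc.prod isCompact_uIcc
  obtain ⟨M, hM⟩ := hK.exists_bound_of_continuousOn hF'.continuousOn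
  refine (intervalIntegral.hasDerivAt_integral_of_dominated_loc_of_deriv_le
      (F := F) (F' := F') (bound := fun _ => M) (Metric.ball_mem_nhds t₀ one_pos) ?_ ?_ ?_ ?_ ?_ ?_).2
  · exact Filter.Eventually.of_forall fun t =>
      (hF.comp (Continuous.prodMk_right t)).aestronglyMeasurable
  · exact (hF.comp (Continuous.prodMk_right t₀)).intervalIntegrable 0 c
  · exact (hF'.comp (Continuous.prodMk_right t₀)).aestronglyMeasurable
  · refine Filter.Eventually.of_forall fun x hx t ht => ?_
    have ht' : t ∈ Icc (t₀ - 1) (t₀ + 1) := by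
      rw [Real.ball_eq_Ioo] at ht; exact Ioo_subset_Icc_self ht
    exact hM (t, x) ⟨ht', uIoc_subset_uIcc hx⟩
  · exact intervalIntegrable_const
  · exact Filter.Eventually.of_forall fun x _ t _ => hd t x

lemma leibniz2 {F F' : ℝ → ℝ → ℝ → ℝ}
    (hF : Continuous fun p : ℝ × ℝ × ℝ => F p.1 p.2.1 p.2.2)
    (hF' : Continuous fun p : ℝ × ℝ × ℝ => F' p.1 p.2.1 p.2.2)
    (hd : ∀ t x y, HasDerivAt (fun s => F s x y) (F' t x y) t) (c d t₀ : ℝ) :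
    HasDerivAt (fun t => ∫ x in (0:ℝ)..c, ∫ y in (0:ℝ)..d, F t x y)
      (∫ x in (0:ℝ)..c, ∫ y in (0:ℝ)..d, F' t₀ x y) t₀ := by
  have rF : Continuous fun p : (ℝ × ℝ) × ℝ => F p.1.1 p.1.2 p.2 :=
    hF.comp (show Continuous fun p : (ℝ × ℝ) × ℝ => ((p.1.1, p.1.2, p.2) : ℝ × ℝ × ℝ)
      by fun_prop)
  have rF' : Continuous fun p : (ℝ × ℝ) × ℝ => F' p.1.1 p.1.2 p.2 :=
    hF'.comp (show Continuous fun p : (ℝ × ℝ) × ℝ => ((p.1.1, p.1.2, p.2) : ℝ × ℝ × ℝ)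
      by fun_prop)
  refine leibniz1 (F := fun t x => ∫ y in (0:ℝ)..d, F t x y)
    (F' := fun t x => ∫ y in (0:ℝ)..d, F' t x y) ?_ ?_ ?_ c t₀
  · exact contP1 (Y := ℝ × ℝ) (F := fun q y => F q.1 q.2 y) rF d
  · exact contP1 (Y := ℝ × ℝ) (F := fun q y => F' q.1 q.2 y) rF' d
  · intro t x
    have sF : Continuous fun p : ℝ × ℝ => F p.1 x p.2 :=
      hF.comp (show Continuous fun p : ℝ × ℝ => ((p.1, x, p.2) : ℝ × ℝ × ℝ) by fun_prop)
    have sF' : Continuous fun p : ℝ × ℝ => F' p.1 x p.2 :=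
      hF'.comp (show Continuous fun p : ℝ × ℝ => ((p.1, x, p.2) : ℝ × ℝ × ℝ) by fun_prop)
    exact leibniz1 (F := fun s y => F s x y) (F' := fun s y => F' s x y)
      sF sF' (fun s y => hd s x y) d t

lemma leibniz3 {F F' : ℝ → ℝ → ℝ → ℝ → ℝ}
    (hF : Continuous fun p : ℝ × ℝ × ℝ × ℝ => F p.1 p.2.1 p.2.2.1 p.2.2.2)
    (hF' : Continuous fun p : ℝ × ℝ × ℝ × ℝ => F' p.1 p.2.1 p.2.2.1 p.2.2.2)
    (hd : ∀ t x y z, HasDerivAt (fun s => F s x y z) (F' t x y z) t) (c d e t₀ : ℝ) :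
    HasDerivAt (fun t => ∫ x in (0:ℝ)..c, ∫ y in (0:ℝ)..d, ∫ z in (0:ℝ)..e, F t x y z)
      (∫ x in (0:ℝ)..c, ∫ y in (0:ℝ)..d, ∫ z in (0:ℝ)..e, F' t₀ x y z) t₀ := by
  have rF : Continuous fun p : ((ℝ × ℝ) × ℝ) × ℝ => F p.1.1.1 p.1.1.2 p.1.2 p.2 :=
    hF.comp (show Continuous fun p : ((ℝ × ℝ) × ℝ) × ℝ =>
      ((p.1.1.1, p.1.1.2, p.1.2, p.2) : ℝ × ℝ × ℝ × ℝ) by fun_prop)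
  have rF' : Continuous fun p : ((ℝ × ℝ) × ℝ) × ℝ => F' p.1.1.1 p.1.1.2 p.1.2 p.2 :=
    hF'.comp (show Continuous fun p : ((ℝ × ℝ) × ℝ) × ℝ =>
      ((p.1.1.1, p.1.1.2, p.1.2, p.2) : ℝ × ℝ × ℝ × ℝ) by fun_prop)
  refine leibniz1 (F := fun t x => ∫ y in (0:ℝ)..d, ∫ z in (0:ℝ)..e, F t x y z)
    (F' := fun t x => ∫ y in (0:ℝ)..d, ∫ z in (0:ℝ)..e, F' t x y z) ?_ ?_ ?_ c t₀
  · exact contP2 (Y := ℝ × ℝ) (F := fun q y z => F q.1 q.2 y z) rF d e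
  · exact contP2 (Y := ℝ × ℝ) (F := fun q y z => F' q.1 q.2 y z) rF' d e
  · intro t x
    have sF : Continuous fun p : ℝ × ℝ × ℝ => F p.1 x p.2.1 p.2.2 :=
      hF.comp (show Continuous fun p : ℝ × ℝ × ℝ =>
        ((p.1, x, p.2.1, p.2.2) : ℝ × ℝ × ℝ × ℝ) by fun_prop)
    have sF' : Continuous fun p : ℝ × ℝ × ℝ => F' p.1 x p.2.1 p.2.2 :=
      hF'.comp (show Continuous fun p : ℝ × ℝ × ℝ =>
        ((p.1, x, p.2.1, p.2.2) : ℝ × ℝ × ℝ × ℝ) by fun_prop)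
    exact leibniz2 (F := fun s y z => F s x y z) (F' := fun s y z => F' s x y z)
      sF sF' (fun s y z => hd s x y z) d e t

lemma int_congr_Ioo {f g : ℝ → ℝ} {c : ℝ} (hc : 0 ≤ c)
    (h : ∀ x ∈ Ioo (0:ℝ) c, f x = g x) :
    ∫ x in (0:ℝ)..c, f x = ∫ x in (0:ℝ)..c, g x := by
  apply intervalIntegral.integral_congr_ae
  have h0 : ∀ᵐ x : ℝ, x ≠ c := by
    rw [MeasureTheory.ae_iff]
    simp only [not_not, setOf_eq_eq_singleton]
    exact measure_singleton c
  filter_upwards [h0] with x hx hmem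
  rw [uIoc_of_le hc] at hmem
  exact h x ⟨hmem.1, lt_of_le_of_ne hmem.2 hx⟩

lemma int_congr_Icc {f g : ℝ → ℝ} {c : ℝ} (hc : 0 ≤ c)
    (h : ∀ x ∈ Icc (0:ℝ) c, f x = g x) :
    ∫ x in (0:ℝ)..c, f x = ∫ x in (0:ℝ)..c, g x :=
  intervalIntegral.integral_congr (by rwa [uIcc_of_le hc])

lemma int_zero_Icc {f : ℝ → ℝ} {c : ℝ} (hc : 0 ≤ c)
    (h : ∀ x ∈ Icc (0:ℝ) c, f x = 0) : ∫ x in (0:ℝ)..c, f x = 0 := by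
  rw [int_congr_Icc hc h]; simp


lemma pd_add {F G : X → ℝ} (hF : ContDiff ℝ (⊤ : ℕ∞) F) (hG : ContDiff ℝ (⊤ : ℕ∞) G) (v : X) :
    pd v (fun p => F p + G p) = fun p => pd v F p + pd v G p := by
  funext p
  simp only [pd]
  rw [fderiv_fun_add ((hF.differentiable (by simp)) p) ((hG.differentiable (by simp)) p)]
  simp

lemma pd_cmul_mul {A G : X → ℝ} (hA : ContDiff ℝ (⊤ : ℕ∞) A) (hG : ContDiff ℝ (⊤ : ℕ∞) G) (c : ℝ) (v : X) :
    pd v (fun p => c * A p * G p) =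
      fun p => c * pd v A p * G p + c * A p * pd v G p := by
  funext p
  simp only [pd]
  rw [fderiv_fun_mul ((contDiff_const.mul hA).differentiable (by simp) p)
      ((hG.differentiable (by simp)) p),
    fderiv_const_mul ((hA.differentiable (by simp)) p) c]
  simp [smul_eq_mul]
  ring

lemma tInt_add {f g : ℝ → ℝ → ℝ → ℝ}
    (hf : Continuous fun p : ℝ × ℝ × ℝ => f p.1 p.2.1 p.2.2)
    (hg : Continuous fun p : ℝ × ℝ × ℝ => g p.1 p.2.1 p.2.2) (c d e : ℝ) :
    (∫ x in (0:ℝ)..c, ∫ y in (0:ℝ)..d, ∫ z in (0:ℝ)..e, (f x y z + g x y z))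
      = (∫ x in (0:ℝ)..c, ∫ y in (0:ℝ)..d, ∫ z in (0:ℝ)..e, f x y z)
        + ∫ x in (0:ℝ)..c, ∫ y in (0:ℝ)..d, ∫ z in (0:ℝ)..e, g x y z := by
  have hfz : ∀ x y : ℝ, Continuous fun z => f x y z := fun x y =>
    hf.comp (show Continuous fun z : ℝ => ((x, y, z) : ℝ × ℝ × ℝ) by fun_prop)
  have hgz : ∀ x y : ℝ, Continuous fun z => g x y z := fun x y =>
    hg.comp (show Continuous fun z : ℝ => ((x, y, z) : ℝ × ℝ × ℝ) by fun_prop)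
  have h1 : ∀ x y : ℝ, (∫ z in (0:ℝ)..e, (f x y z + g x y z))
      = (∫ z in (0:ℝ)..e, f x y z) + ∫ z in (0:ℝ)..e, g x y z := fun x y =>
    intervalIntegral.integral_add ((hfz x y).intervalIntegrable 0 e)
      ((hgz x y).intervalIntegrable 0 e)
  simp only [h1]
  have hfy : ∀ x : ℝ, Continuous fun y => ∫ z in (0:ℝ)..e, f x y z := fun x =>
    contP1 (Y := ℝ) (F := fun y z => f x y z)
      (hf.comp (show Continuous fun q : ℝ × ℝ => ((x, q.1, q.2) : ℝ × ℝ × ℝ) by fun_prop)) e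
  have hgy : ∀ x : ℝ, Continuous fun y => ∫ z in (0:ℝ)..e, g x y z := fun x =>
    contP1 (Y := ℝ) (F := fun y z => g x y z)
      (hg.comp (show Continuous fun q : ℝ × ℝ => ((x, q.1, q.2) : ℝ × ℝ × ℝ) by fun_prop)) e
  have h2 : ∀ x : ℝ, (∫ y in (0:ℝ)..d,
        ((∫ z in (0:ℝ)..e, f x y z) + ∫ z in (0:ℝ)..e, g x y z))
      = (∫ y in (0:ℝ)..d, ∫ z in (0:ℝ)..e, f x y z)
        + ∫ y in (0:ℝ)..d, ∫ z in (0:ℝ)..e, g x y z := fun x =>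
    intervalIntegral.integral_add ((hfy x).intervalIntegrable 0 d)
      ((hgy x).intervalIntegrable 0 d)
  simp only [h2]
  exact intervalIntegral.integral_add
    ((contP2 (Y := ℝ) (F := f) (hf.comp (show Continuous fun q : (ℝ × ℝ) × ℝ =>
        ((q.1.1, q.1.2, q.2) : ℝ × ℝ × ℝ) by fun_prop)) d e).intervalIntegrable 0 c)
    ((contP2 (Y := ℝ) (F := g) (hg.comp (show Continuous fun q : (ℝ × ℝ) × ℝ =>
        ((q.1.1, q.1.2, q.2) : ℝ × ℝ × ℝ) by fun_prop)) d e).intervalIntegrable 0 c)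

lemma tInt_congr_Ioo {f g : ℝ → ℝ → ℝ → ℝ} {c d e : ℝ}
    (hc : 0 ≤ c) (hd : 0 ≤ d) (he : 0 ≤ e)
    (h : ∀ x ∈ Ioo (0:ℝ) c, ∀ y ∈ Ioo (0:ℝ) d, ∀ z ∈ Ioo (0:ℝ) e, f x y z = g x y z) :
    (∫ x in (0:ℝ)..c, ∫ y in (0:ℝ)..d, ∫ z in (0:ℝ)..e, f x y z)
      = ∫ x in (0:ℝ)..c, ∫ y in (0:ℝ)..d, ∫ z in (0:ℝ)..e, g x y z := by
  apply int_congr_Ioo hc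
  intro x hx
  apply int_congr_Ioo hd
  intro y hy
  apply int_congr_Ioo he
  intro z hz
  exact h x hx y hy z hz

lemma dInt_zero {f : ℝ → ℝ → ℝ} {c d : ℝ} (hc : 0 ≤ c) (hd : 0 ≤ d)
    (h : ∀ x ∈ Icc (0:ℝ) c, ∀ y ∈ Icc (0:ℝ) d, f x y = 0) :
    (∫ x in (0:ℝ)..c, ∫ y in (0:ℝ)..d, f x y) = 0 := by
  apply int_zero_Icc hc
  intro x hx
  exact int_zero_Icc hd (h x hx)

noncomputable def UC (f : ℝ → ℝ → ℝ → ℝ → ℝ) : X → ℝ :=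
  fun p => f p.1 p.2.1 p.2.2.1 p.2.2.2

end E3D

open E3D in
/-- Energy identity for the 3D model with mixed Dirichlet–Robin boundary
conditions:  `d/dt [∫_Ω (u² + 2|∇ψ|²) - 2β ∫_{Ω_x} ψ(x,0)²] = 0`. -/
theorem stmt_14 (a b β : ℝ) (ha : 0 < a) (hb : 0 < b)
    (u ψ : ℝ → ℝ → ℝ → ℝ → ℝ) (E : ℝ → ℝ)
    -- smoothness of the solution
    (hu_smooth : ContDiff ℝ (⊤ : ℕ∞) (fun p : ℝ × ℝ × ℝ × ℝ => u p.1 p.2.1 p.2.2.1 p.2.2.2))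
    (hψ_smooth : ContDiff ℝ (⊤ : ℕ∞) (fun p : ℝ × ℝ × ℝ × ℝ => ψ p.1 p.2.1 p.2.2.1 p.2.2.2))
    -- the PDE:  u_t = 2 u ψ_z
    (hPDE_u : ∀ t : ℝ, ∀ x₁ ∈ Ioo (0:ℝ) a, ∀ x₂ ∈ Ioo (0:ℝ) a, ∀ z ∈ Ioo (0:ℝ) b,
        deriv (fun s => u s x₁ x₂ z) t = 2 * u t x₁ x₂ z * dz (ψ t) x₁ x₂ z)
    -- the PDE:  -Δψ_t = (u²)_z
    (hPDE_ψ : ∀ t : ℝ, ∀ x₁ ∈ Ioo (0:ℝ) a, ∀ x₂ ∈ Ioo (0:ℝ) a, ∀ z ∈ Ioo (0:ℝ) b,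
        -(dx1 (dx1 (fun y₁ y₂ w => deriv (fun s => ψ s y₁ y₂ w) t)) x₁ x₂ z
          + dx2 (dx2 (fun y₁ y₂ w => deriv (fun s => ψ s y₁ y₂ w) t)) x₁ x₂ z
          + dz (dz (fun y₁ y₂ w => deriv (fun s => ψ s y₁ y₂ w) t)) x₁ x₂ z)
          = dz (fun y₁ y₂ w => (u t y₁ y₂ w) ^ 2) x₁ x₂ z)
    -- ψ = 0 on ∂Ω \ Γ  (lateral boundary and top face z = b)
    (hψ_lat : ∀ t : ℝ, ∀ x₂ ∈ Icc (0:ℝ) a, ∀ z ∈ Icc (0:ℝ) b,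
        ψ t 0 x₂ z = 0 ∧ ψ t a x₂ z = 0)
    (hψ_lat' : ∀ t : ℝ, ∀ x₁ ∈ Icc (0:ℝ) a, ∀ z ∈ Icc (0:ℝ) b,
        ψ t x₁ 0 z = 0 ∧ ψ t x₁ a z = 0)
    (hψ_top : ∀ t : ℝ, ∀ x₁ ∈ Icc (0:ℝ) a, ∀ x₂ ∈ Icc (0:ℝ) a, ψ t x₁ x₂ b = 0)
    -- Robin condition  ψ_z + β ψ = 0  on Γ = {z = 0}
    (hψ_robin : ∀ t : ℝ, ∀ x₁ ∈ Icc (0:ℝ) a, ∀ x₂ ∈ Icc (0:ℝ) a,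
        dz (ψ t) x₁ x₂ 0 + β * ψ t x₁ x₂ 0 = 0)
    -- u vanishes on {z = 0} ∪ {z = b}
    (hu_bc : ∀ t : ℝ, ∀ x₁ ∈ Icc (0:ℝ) a, ∀ x₂ ∈ Icc (0:ℝ) a,
        u t x₁ x₂ 0 = 0 ∧ u t x₁ x₂ b = 0)
    -- the energy
    (hE : ∀ t : ℝ, E t =
        (∫ x₁ in (0:ℝ)..a, ∫ x₂ in (0:ℝ)..a, ∫ z in (0:ℝ)..b,
          ((u t x₁ x₂ z) ^ 2
            + 2 * ((dx1 (ψ t) x₁ x₂ z) ^ 2 + (dx2 (ψ t) x₁ x₂ z) ^ 2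
                   + (dz (ψ t) x₁ x₂ z) ^ 2)))
        - 2 * β * ∫ x₁ in (0:ℝ)..a, ∫ x₂ in (0:ℝ)..a, (ψ t x₁ x₂ 0) ^ 2) :
    ∀ t : ℝ, HasDerivAt E 0 t := by
  have hΨ : ContDiff ℝ (⊤ : ℕ∞) (UC ψ) := hψ_smooth
  have hUu : ContDiff ℝ (⊤ : ℕ∞) (UC u) := hu_smooth
  have hQ : ContDiff ℝ (⊤ : ℕ∞) (fun p : X => UC u p ^ 2) := hUu.pow 2
  have h1 : ContDiff ℝ (⊤ : ℕ∞) (pd e1 (UC ψ)) := pd_smooth hΨ e1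
  have h2 : ContDiff ℝ (⊤ : ℕ∞) (pd e2 (UC ψ)) := pd_smooth hΨ e2
  have h3 : ContDiff ℝ (⊤ : ℕ∞) (pd e3 (UC ψ)) := pd_smooth hΨ e3
  have h4 : ContDiff ℝ (⊤ : ℕ∞) (pd e4 (UC ψ)) := pd_smooth hΨ e4
  have h12 : ContDiff ℝ (⊤ : ℕ∞) (pd e2 (pd e1 (UC ψ))) := pd_smooth h1 e2
  have h13 : ContDiff ℝ (⊤ : ℕ∞) (pd e3 (pd e1 (UC ψ))) := pd_smooth h1 e3
  have h14 : ContDiff ℝ (⊤ : ℕ∞) (pd e4 (pd e1 (UC ψ))) := pd_smooth h1 e4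
  have hu1 : ContDiff ℝ (⊤ : ℕ∞) (pd e1 (UC u)) := pd_smooth hUu e1
  -- curried derivative rewriting
  have Sdx1 : ∀ t x y z : ℝ, dx1 (ψ t) x y z = pd e2 (UC ψ) (t,x,y,z) :=
    fun t x y z => (hds2 hΨ t x y z).deriv
  have Sdx2 : ∀ t x y z : ℝ, dx2 (ψ t) x y z = pd e3 (UC ψ) (t,x,y,z) :=
    fun t x y z => (hds3 hΨ t x y z).deriv
  have Sdz : ∀ t x y z : ℝ, dz (ψ t) x y z = pd e4 (UC ψ) (t,x,y,z) :=
    fun t x y z => (hds4 hΨ t x y z).deriv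
  have Sdt : ∀ t x y z : ℝ, deriv (fun s => ψ s x y z) t = pd e1 (UC ψ) (t,x,y,z) :=
    fun t x y z => (hds1 hΨ t x y z).deriv
  -- boundary conditions, uncurried form
  have L0 : ∀ t y z : ℝ, y ∈ Icc (0:ℝ) a → z ∈ Icc (0:ℝ) b → UC ψ (t,0,y,z) = 0 :=
    fun t y z hy hz => (hψ_lat t y hy z hz).1
  have La : ∀ t y z : ℝ, y ∈ Icc (0:ℝ) a → z ∈ Icc (0:ℝ) b → UC ψ (t,a,y,z) = 0 :=
    fun t y z hy hz => (hψ_lat t y hy z hz).2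
  have M0 : ∀ t x z : ℝ, x ∈ Icc (0:ℝ) a → z ∈ Icc (0:ℝ) b → UC ψ (t,x,0,z) = 0 :=
    fun t x z hx hz => (hψ_lat' t x hx z hz).1
  have Mb : ∀ t x z : ℝ, x ∈ Icc (0:ℝ) a → z ∈ Icc (0:ℝ) b → UC ψ (t,x,a,z) = 0 :=
    fun t x z hx hz => (hψ_lat' t x hx z hz).2
  have Tb : ∀ t x y : ℝ, x ∈ Icc (0:ℝ) a → y ∈ Icc (0:ℝ) a → UC ψ (t,x,y,b) = 0 :=
    fun t x y hx hy => hψ_top t x hx y hy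
  have U0 : ∀ t x y : ℝ, x ∈ Icc (0:ℝ) a → y ∈ Icc (0:ℝ) a → UC u (t,x,y,0) = 0 :=
    fun t x y hx hy => (hu_bc t x hx y hy).1
  have Ub : ∀ t x y : ℝ, x ∈ Icc (0:ℝ) a → y ∈ Icc (0:ℝ) a → UC u (t,x,y,b) = 0 :=
    fun t x y hx hy => (hu_bc t x hx y hy).2
  -- the PDEs in uncurried form
  have PDEu : ∀ t : ℝ, ∀ x ∈ Ioo (0:ℝ) a, ∀ y ∈ Ioo (0:ℝ) a, ∀ z ∈ Ioo (0:ℝ) b,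
      pd e1 (UC u) (t,x,y,z) = 2 * UC u (t,x,y,z) * pd e4 (UC ψ) (t,x,y,z) := by
    intro t x hx y hy z hz
    have h := hPDE_u t x hx y hy z hz
    rw [Sdz] at h
    rw [show deriv (fun s => u s x y z) t = pd e1 (UC u) (t,x,y,z) from
      (hds1 hUu t x y z).deriv] at h
    exact h
  have dcur2 : ∀ (G : X → ℝ), ContDiff ℝ (⊤ : ℕ∞) G → ∀ t : ℝ,
      dx1 (fun aa bb cc => G (t,aa,bb,cc)) = fun aa bb cc => pd e2 G (t,aa,bb,cc) := by
    intro G hG t; funext x y z; exact (hds2 hG t x y z).deriv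
  have dcur3 : ∀ (G : X → ℝ), ContDiff ℝ (⊤ : ℕ∞) G → ∀ t : ℝ,
      dx2 (fun aa bb cc => G (t,aa,bb,cc)) = fun aa bb cc => pd e3 G (t,aa,bb,cc) := by
    intro G hG t; funext x y z; exact (hds3 hG t x y z).deriv
  have dcur4 : ∀ (G : X → ℝ), ContDiff ℝ (⊤ : ℕ∞) G → ∀ t : ℝ,
      dz (fun aa bb cc => G (t,aa,bb,cc)) = fun aa bb cc => pd e4 G (t,aa,bb,cc) := by
    intro G hG t; funext x y z; exact (hds4 hG t x y z).deriv
  have PDEψ : ∀ t : ℝ, ∀ x ∈ Ioo (0:ℝ) a, ∀ y ∈ Ioo (0:ℝ) a, ∀ z ∈ Ioo (0:ℝ) b,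
      pd e2 (pd e2 (pd e1 (UC ψ))) (t,x,y,z) + pd e3 (pd e3 (pd e1 (UC ψ))) (t,x,y,z)
        + pd e4 (pd e4 (pd e1 (UC ψ))) (t,x,y,z)
        + pd e4 (fun p : X => UC u p ^ 2) (t,x,y,z) = 0 := by
    intro t x hx y hy z hz
    have h := hPDE_ψ t x hx y hy z hz
    have hfun : (fun y₁ y₂ w => deriv (fun s => ψ s y₁ y₂ w) t)
        = fun aa bb cc => pd e1 (UC ψ) (t,aa,bb,cc) := by
      funext aa bb cc; exact Sdt t aa bb cc
    have hfun2 : (fun y₁ y₂ w => u t y₁ y₂ w ^ 2)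
        = fun aa bb cc => (fun p : X => UC u p ^ 2) (t,aa,bb,cc) := rfl
    rw [hfun, hfun2, dcur2 _ h1 t, dcur2 _ h12 t, dcur3 _ h1 t, dcur3 _ h13 t,
      dcur4 _ h1 t, dcur4 _ h14 t, dcur4 _ hQ t] at h
    simp only [] at h
    linarith
  -- the Robin condition and its time derivative
  have Rob : ∀ t : ℝ, ∀ x ∈ Icc (0:ℝ) a, ∀ y ∈ Icc (0:ℝ) a,
      pd e4 (UC ψ) (t,x,y,0) = -(β * UC ψ (t,x,y,0)) := by
    intro t x hx y hy
    have h := hψ_robin t x hx y hy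
    rw [Sdz] at h
    have h' : pd e4 (UC ψ) (t,x,y,0) + β * UC ψ (t,x,y,0) = 0 := h
    linarith
  have RobT : ∀ t : ℝ, ∀ x ∈ Icc (0:ℝ) a, ∀ y ∈ Icc (0:ℝ) a,
      pd e4 (pd e1 (UC ψ)) (t,x,y,0) = -(β * pd e1 (UC ψ) (t,x,y,0)) := by
    intro t x hx y hy
    have hfe : (fun s => pd e4 (UC ψ) (s,x,y,0)) = fun s => -(β * UC ψ (s,x,y,0)) := by
      funext s; exact Rob s x hx y hy
    have hA : HasDerivAt (fun s => pd e4 (UC ψ) (s,x,y,0))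
        (pd e1 (pd e4 (UC ψ)) (t,x,y,0)) t := hds1 h4 t x y 0
    rw [hfe] at hA
    have hB : HasDerivAt (fun s => -(β * UC ψ (s,x,y,0)))
        (-(β * pd e1 (UC ψ) (t,x,y,0))) t :=
      ((hds1 hΨ t x y 0).const_mul β).neg
    have hu := hA.unique hB
    rw [← pd_comm hΨ e1 e4]
    exact hu
  -- the energy in uncurried form
  have hEeq : E = fun t =>
      (∫ x in (0:ℝ)..a, ∫ y in (0:ℝ)..a, ∫ z in (0:ℝ)..b,
        (UC u (t,x,y,z) ^ 2 + 2 * (pd e2 (UC ψ) (t,x,y,z) ^ 2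
          + pd e3 (UC ψ) (t,x,y,z) ^ 2 + pd e4 (UC ψ) (t,x,y,z) ^ 2)))
      - 2 * β * ∫ x in (0:ℝ)..a, ∫ y in (0:ℝ)..a, UC ψ (t,x,y,0) ^ 2 := by
    funext t
    rw [hE t]
    simp only [Sdx1, Sdx2, Sdz]
    rfl
  intro t0
  -- derivative of the bulk integral
  have hGc : ContDiff ℝ (⊤ : ℕ∞) (fun p : X => UC u p ^ 2 + 2 * (pd e2 (UC ψ) p ^ 2
      + pd e3 (UC ψ) p ^ 2 + pd e4 (UC ψ) p ^ 2)) :=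
    (hUu.pow 2).add (contDiff_const.mul (((h2.pow 2).add (h3.pow 2)).add (h4.pow 2)))
  have hGc' : ContDiff ℝ (⊤ : ℕ∞) (fun p : X => 2 * UC u p * pd e1 (UC u) p
      + 2 * (2 * pd e2 (UC ψ) p * pd e2 (pd e1 (UC ψ)) p
        + 2 * pd e3 (UC ψ) p * pd e3 (pd e1 (UC ψ)) p
        + 2 * pd e4 (UC ψ) p * pd e4 (pd e1 (UC ψ)) p)) :=
    ((contDiff_const.mul hUu).mul hu1).add (contDiff_const.mul
      ((((contDiff_const.mul h2).mul h12).add ((contDiff_const.mul h3).mul h13)).add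
        ((contDiff_const.mul h4).mul h14)))
  have hI : HasDerivAt (fun t => ∫ x in (0:ℝ)..a, ∫ y in (0:ℝ)..a, ∫ z in (0:ℝ)..b,
      (UC u (t,x,y,z) ^ 2 + 2 * (pd e2 (UC ψ) (t,x,y,z) ^ 2 + pd e3 (UC ψ) (t,x,y,z) ^ 2
        + pd e4 (UC ψ) (t,x,y,z) ^ 2)))
      (∫ x in (0:ℝ)..a, ∫ y in (0:ℝ)..a, ∫ z in (0:ℝ)..b,
        (2 * UC u (t0,x,y,z) * pd e1 (UC u) (t0,x,y,z)
          + 2 * (2 * pd e2 (UC ψ) (t0,x,y,z) * pd e2 (pd e1 (UC ψ)) (t0,x,y,z)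
            + 2 * pd e3 (UC ψ) (t0,x,y,z) * pd e3 (pd e1 (UC ψ)) (t0,x,y,z)
            + 2 * pd e4 (UC ψ) (t0,x,y,z) * pd e4 (pd e1 (UC ψ)) (t0,x,y,z)))) t0 := by
    refine leibniz3
      (F := fun t x y z => UC u (t,x,y,z) ^ 2 + 2 * (pd e2 (UC ψ) (t,x,y,z) ^ 2
        + pd e3 (UC ψ) (t,x,y,z) ^ 2 + pd e4 (UC ψ) (t,x,y,z) ^ 2))
      (F' := fun t x y z => 2 * UC u (t,x,y,z) * pd e1 (UC u) (t,x,y,z)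
        + 2 * (2 * pd e2 (UC ψ) (t,x,y,z) * pd e2 (pd e1 (UC ψ)) (t,x,y,z)
          + 2 * pd e3 (UC ψ) (t,x,y,z) * pd e3 (pd e1 (UC ψ)) (t,x,y,z)
          + 2 * pd e4 (UC ψ) (t,x,y,z) * pd e4 (pd e1 (UC ψ)) (t,x,y,z)))
      ?_ ?_ ?_ a a b t0
    · exact hGc.continuous
    · exact hGc'.continuous
    · intro t x y z
      have H := ((hds1 hUu t x y z).pow 2).add
        (((((hds1 h2 t x y z).pow 2).add ((hds1 h3 t x y z).pow 2)).add
          ((hds1 h4 t x y z).pow 2)).const_mul 2)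
      refine H.congr_deriv ?_
      rw [pd_comm hΨ e2 e1, pd_comm hΨ e3 e1, pd_comm hΨ e4 e1]
      push_cast
      ring
  -- derivative of the boundary integral
  have hBctn : Continuous fun p : ℝ × ℝ × ℝ => UC ψ (p.1, p.2.1, p.2.2, 0) :=
    hΨ.continuous.comp (show Continuous fun p : ℝ × ℝ × ℝ =>
      ((p.1, p.2.1, p.2.2, 0) : X) by fun_prop)
  have hBctn' : Continuous fun p : ℝ × ℝ × ℝ => pd e1 (UC ψ) (p.1, p.2.1, p.2.2, 0) :=
    h1.continuous.comp (show Continuous fun p : ℝ × ℝ × ℝ =>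
      ((p.1, p.2.1, p.2.2, 0) : X) by fun_prop)
  have hB : HasDerivAt (fun t => ∫ x in (0:ℝ)..a, ∫ y in (0:ℝ)..a, UC ψ (t,x,y,0) ^ 2)
      (∫ x in (0:ℝ)..a, ∫ y in (0:ℝ)..a,
        2 * UC ψ (t0,x,y,0) * pd e1 (UC ψ) (t0,x,y,0)) t0 := by
    refine leibniz2
      (F := fun t x y => UC ψ (t,x,y,0) ^ 2)
      (F' := fun t x y => 2 * UC ψ (t,x,y,0) * pd e1 (UC ψ) (t,x,y,0))
      ?_ ?_ ?_ a a t0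
    · exact hBctn.pow 2
    · exact (continuous_const.mul hBctn).mul hBctn'
    · intro t x y
      have H := (hds1 hΨ t x y 0).pow 2
      refine H.congr_deriv ?_
      push_cast
      ring
  -- the divergence-form vector field
  have hR1s : ContDiff ℝ (⊤ : ℕ∞) (fun p : X => 4 * pd e2 (pd e1 (UC ψ)) p * UC ψ p) :=
    (contDiff_const.mul h12).mul hΨ
  have hR2s : ContDiff ℝ (⊤ : ℕ∞) (fun p : X => 4 * pd e3 (pd e1 (UC ψ)) p * UC ψ p) :=
    (contDiff_const.mul h13).mul hΨ
  have hR3s : ContDiff ℝ (⊤ : ℕ∞) (fun p : X => 4 * pd e4 (pd e1 (UC ψ)) p * UC ψ p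
      + 4 * UC u p ^ 2 * UC ψ p) :=
    ((contDiff_const.mul h14).mul hΨ).add ((contDiff_const.mul hQ).mul hΨ)
  have hD2 : pd e2 (fun p : X => 4 * pd e2 (pd e1 (UC ψ)) p * UC ψ p)
      = fun p => 4 * pd e2 (pd e2 (pd e1 (UC ψ))) p * UC ψ p
          + 4 * pd e2 (pd e1 (UC ψ)) p * pd e2 (UC ψ) p :=
    pd_cmul_mul h12 hΨ 4 e2
  have hD3 : pd e3 (fun p : X => 4 * pd e3 (pd e1 (UC ψ)) p * UC ψ p)
      = fun p => 4 * pd e3 (pd e3 (pd e1 (UC ψ))) p * UC ψ p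
          + 4 * pd e3 (pd e1 (UC ψ)) p * pd e3 (UC ψ) p :=
    pd_cmul_mul h13 hΨ 4 e3
  have hD4 : pd e4 (fun p : X => 4 * pd e4 (pd e1 (UC ψ)) p * UC ψ p
        + 4 * UC u p ^ 2 * UC ψ p)
      = fun p => (4 * pd e4 (pd e4 (pd e1 (UC ψ))) p * UC ψ p
          + 4 * pd e4 (pd e1 (UC ψ)) p * pd e4 (UC ψ) p)
        + (4 * pd e4 (fun q : X => UC u q ^ 2) p * UC ψ p
          + 4 * UC u p ^ 2 * pd e4 (UC ψ) p) := by
    rw [pd_add ((contDiff_const.mul h14).mul hΨ) ((contDiff_const.mul hQ).mul hΨ) e4,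
      pd_cmul_mul h14 hΨ 4 e4, pd_cmul_mul hQ hΨ 4 e4]
  set R1 : X → ℝ := fun p : X => 4 * pd e2 (pd e1 (UC ψ)) p * UC ψ p with hR1def
  set R2 : X → ℝ := fun p : X => 4 * pd e3 (pd e1 (UC ψ)) p * UC ψ p with hR2def
  set R3 : X → ℝ := fun p : X => 4 * pd e4 (pd e1 (UC ψ)) p * UC ψ p
      + 4 * UC u p ^ 2 * UC ψ p with hR3def
  -- step 1: the time derivative of the bulk integrand is a spatial divergence
  have step1 : (∫ x in (0:ℝ)..a, ∫ y in (0:ℝ)..a, ∫ z in (0:ℝ)..b,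
        (2 * UC u (t0,x,y,z) * pd e1 (UC u) (t0,x,y,z)
          + 2 * (2 * pd e2 (UC ψ) (t0,x,y,z) * pd e2 (pd e1 (UC ψ)) (t0,x,y,z)
            + 2 * pd e3 (UC ψ) (t0,x,y,z) * pd e3 (pd e1 (UC ψ)) (t0,x,y,z)
            + 2 * pd e4 (UC ψ) (t0,x,y,z) * pd e4 (pd e1 (UC ψ)) (t0,x,y,z))))
      = ∫ x in (0:ℝ)..a, ∫ y in (0:ℝ)..a, ∫ z in (0:ℝ)..b,
        (pd e2 R1 (t0,x,y,z) + (pd e3 R2 (t0,x,y,z) + pd e4 R3 (t0,x,y,z))) := by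
    apply tInt_congr_Ioo ha.le ha.le hb.le
    intro x hx y hy z hz
    simp only [hD2, hD3, hD4]
    have eψ := PDEψ t0 x hx y hy z hz
    have eu := PDEu t0 x hx y hy z hz
    linear_combination (2 * UC u (t0,x,y,z)) * eu - (4 * UC ψ (t0,x,y,z)) * eψ
  -- continuity of the divergence pieces
  have cD2 : Continuous fun p : ℝ × ℝ × ℝ => pd e2 R1 (t0, p.1, p.2.1, p.2.2) :=
    (pd_smooth hR1s e2).continuous.comp (show Continuous fun p : ℝ × ℝ × ℝ =>
      ((t0, p.1, p.2.1, p.2.2) : X) by fun_prop)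
  have cD3 : Continuous fun p : ℝ × ℝ × ℝ => pd e3 R2 (t0, p.1, p.2.1, p.2.2) :=
    (pd_smooth hR2s e3).continuous.comp (show Continuous fun p : ℝ × ℝ × ℝ =>
      ((t0, p.1, p.2.1, p.2.2) : X) by fun_prop)
  have cD4 : Continuous fun p : ℝ × ℝ × ℝ => pd e4 R3 (t0, p.1, p.2.1, p.2.2) :=
    (pd_smooth hR3s e4).continuous.comp (show Continuous fun p : ℝ × ℝ × ℝ =>
      ((t0, p.1, p.2.1, p.2.2) : X) by fun_prop)
  -- the three divergence integrals
  have J2 : (∫ x in (0:ℝ)..a, ∫ y in (0:ℝ)..a, ∫ z in (0:ℝ)..b,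
      pd e2 R1 (t0,x,y,z)) = 0 := by
    have hcont2 : Continuous fun x : ℝ => ∫ y in (0:ℝ)..a, ∫ z in (0:ℝ)..b,
        pd e2 R1 (t0,x,y,z) :=
      contP2 (Y := ℝ) (F := fun x y z => pd e2 R1 (t0,x,y,z))
        ((pd_smooth hR1s e2).continuous.comp (show Continuous fun q : (ℝ × ℝ) × ℝ =>
          ((t0, q.1.1, q.1.2, q.2) : X) by fun_prop)) a b
    have hcR1a : Continuous fun p : ℝ × ℝ × ℝ => R1 (t0, p.1, p.2.1, p.2.2) :=
      hR1s.continuous.comp (show Continuous fun p : ℝ × ℝ × ℝ =>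
        ((t0, p.1, p.2.1, p.2.2) : X) by fun_prop)
    rw [intervalIntegral.integral_eq_sub_of_hasDerivAt
      (f := fun x => ∫ y in (0:ℝ)..a, ∫ z in (0:ℝ)..b, R1 (t0,x,y,z))
      (fun x _ => leibniz2 (F := fun s y z => R1 (t0,s,y,z))
        (F' := fun s y z => pd e2 R1 (t0,s,y,z)) hcR1a cD2
        (fun s y z => hds2 hR1s t0 s y z) a b x)
      (hcont2.intervalIntegrable 0 a)]
    have hAz : ∀ y ∈ Icc (0:ℝ) a, ∀ z ∈ Icc (0:ℝ) b, R1 (t0,a,y,z) = 0 := by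
      intro y hy z hz; simp only [hR1def]; rw [La t0 y z hy hz]; ring
    have h0z : ∀ y ∈ Icc (0:ℝ) a, ∀ z ∈ Icc (0:ℝ) b, R1 (t0,0,y,z) = 0 := by
      intro y hy z hz; simp only [hR1def]; rw [L0 t0 y z hy hz]; ring
    rw [dInt_zero ha.le hb.le hAz, dInt_zero ha.le hb.le h0z]
    ring
  have J3 : (∫ x in (0:ℝ)..a, ∫ y in (0:ℝ)..a, ∫ z in (0:ℝ)..b,
      pd e3 R2 (t0,x,y,z)) = 0 := by
    apply int_zero_Icc ha.le
    intro x hx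
    have hcR2a : Continuous fun p : ℝ × ℝ => R2 (t0, x, p.1, p.2) :=
      hR2s.continuous.comp (show Continuous fun p : ℝ × ℝ =>
        ((t0, x, p.1, p.2) : X) by fun_prop)
    have hcD3a : Continuous fun p : ℝ × ℝ => pd e3 R2 (t0, x, p.1, p.2) :=
      (pd_smooth hR2s e3).continuous.comp (show Continuous fun p : ℝ × ℝ =>
        ((t0, x, p.1, p.2) : X) by fun_prop)
    have hcont3 : Continuous fun y : ℝ => ∫ z in (0:ℝ)..b, pd e3 R2 (t0,x,y,z) :=
      contP1 (Y := ℝ) (F := fun y z => pd e3 R2 (t0,x,y,z)) hcD3a b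
    rw [intervalIntegral.integral_eq_sub_of_hasDerivAt
      (f := fun y => ∫ z in (0:ℝ)..b, R2 (t0,x,y,z))
      (fun y _ => leibniz1 (F := fun s z => R2 (t0,x,s,z))
        (F' := fun s z => pd e3 R2 (t0,x,s,z)) hcR2a hcD3a
        (fun s z => hds3 hR2s t0 x s z) b y)
      (hcont3.intervalIntegrable 0 a)]
    have hAz : ∀ z ∈ Icc (0:ℝ) b, R2 (t0,x,a,z) = 0 := by
      intro z hz; simp only [hR2def]; rw [Mb t0 x z hx hz]; ring
    have h0z : ∀ z ∈ Icc (0:ℝ) b, R2 (t0,x,0,z) = 0 := by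
      intro z hz; simp only [hR2def]; rw [M0 t0 x z hx hz]; ring
    rw [int_zero_Icc hb.le hAz, int_zero_Icc hb.le h0z]
    ring
  have J4 : (∫ x in (0:ℝ)..a, ∫ y in (0:ℝ)..a, ∫ z in (0:ℝ)..b,
      pd e4 R3 (t0,x,y,z))
      = ∫ x in (0:ℝ)..a, ∫ y in (0:ℝ)..a,
        4 * β * pd e1 (UC ψ) (t0,x,y,0) * UC ψ (t0,x,y,0) := by
    apply int_congr_Icc ha.le
    intro x hx
    apply int_congr_Icc ha.le
    intro y hy
    rw [intervalIntegral.integral_eq_sub_of_hasDerivAt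
      (f := fun z => R3 (t0,x,y,z)) (fun z _ => hds4 hR3s t0 x y z)
      (((pd_smooth hR3s e4).continuous.comp (show Continuous fun z : ℝ =>
        ((t0,x,y,z) : X) by fun_prop)).intervalIntegrable 0 b)]
    simp only [hR3def]
    rw [Tb t0 x y hx hy, RobT t0 x hx y hy, U0 t0 x y hx hy]
    ring
  -- rescaling the boundary term
  have hBscale : 2 * β * (∫ x in (0:ℝ)..a, ∫ y in (0:ℝ)..a,
        2 * UC ψ (t0,x,y,0) * pd e1 (UC ψ) (t0,x,y,0))
      = ∫ x in (0:ℝ)..a, ∫ y in (0:ℝ)..a,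
        4 * β * pd e1 (UC ψ) (t0,x,y,0) * UC ψ (t0,x,y,0) := by
    rw [← intervalIntegral.integral_const_mul]
    apply int_congr_Icc ha.le
    intro x hx
    rw [← intervalIntegral.integral_const_mul]
    apply int_congr_Icc ha.le
    intro y hy
    ring
  -- assemble
  have hder := hI.sub (hB.const_mul (2*β))
  rw [step1, tInt_add (f := fun x y z => pd e2 R1 (t0,x,y,z))
      (g := fun x y z => pd e3 R2 (t0,x,y,z) + pd e4 R3 (t0,x,y,z)) cD2 (cD3.add cD4) a a b,
    tInt_add (f := fun x y z => pd e3 R2 (t0,x,y,z))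
      (g := fun x y z => pd e4 R3 (t0,x,y,z)) cD3 cD4 a a b,
    J2, J3, J4, hBscale] at hder
  rw [hEeq]
  refine hder.congr_deriv ?_
  ring
end

section
/- After the sine transform in x₁, x₂, the solution of |k|² v̂ - v̂_zz = f̂ on (0,∞) with v̂_z(0) + β v̂(0) = 0, v̂ ∈ L²(0,∞), and β ≠ |k|, satisfies ‖v̂(k,·)‖_{L²(0,∞)} ≤ (1/|k|²)(1 + |(|k|+β)/(|k|-β)|) ‖f̂(k,·)‖_{L²(0,∞)} and ‖v̂_z(k,·)‖_{L²(0,∞)} ≤ (1/|k|)(1 + |(|k|+β)/(|k|-β)|) ‖f̂(k,·)‖_{L²(0,∞)}. -/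
open Set Real MeasureTheory Filter

lemma scalar_cs (A B s : ℝ) (hA : 0 ≤ A) (hB : 0 ≤ B)
    (h : ∀ t > (0:ℝ), s ≤ (t*A + B/t)/2) : s ≤ Real.sqrt A * Real.sqrt B := by
  rcases eq_or_lt_of_le hA with hA0 | hApos
  · -- A = 0
    rw [← hA0, Real.sqrt_zero, zero_mul]
    by_contra hs
    push_neg at hs
    have ht : (0:ℝ) < B/s + 1 := by positivity
    have := h _ ht
    rw [← hA0] at this
    simp only [mul_zero, zero_add] at this
    have hB2 : B / (B/s+1) < s := by
      rw [div_lt_iff₀ ht]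
      have : s * (B/s) = B := by field_simp
      nlinarith
    linarith
  · rcases eq_or_lt_of_le hB with hB0 | hBpos
    · rw [← hB0, Real.sqrt_zero, mul_zero]
      by_contra hs
      push_neg at hs
      have ht : (0:ℝ) < s/A := by positivity
      have := h _ ht
      rw [← hB0] at this
      have : s ≤ s/2 := by
        calc s ≤ (s/A*A + 0/(s/A))/2 := this
        _ = s/2 := by field_simp; ring
      linarith
    · have hsA : (0:ℝ) < Real.sqrt A := Real.sqrt_pos.2 hApos
      have hsB : (0:ℝ) < Real.sqrt B := Real.sqrt_pos.2 hBpos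
      have ht : (0:ℝ) < Real.sqrt B / Real.sqrt A := by positivity
      have := h _ ht
      have hA' : Real.sqrt A ^ 2 = A := Real.sq_sqrt hA
      have hB' : Real.sqrt B ^ 2 = B := Real.sq_sqrt hB
      calc s ≤ (Real.sqrt B / Real.sqrt A * A + B/(Real.sqrt B / Real.sqrt A))/2 := this
        _ = Real.sqrt A * Real.sqrt B := by
            field_simp; linear_combination (B - 2*Real.sqrt B^2) * hA' - A * hB'

lemma integral_cs (a b : ℝ → ℝ) (μ : Measure ℝ)
    (ha : Integrable (fun z => a z ^ 2) μ) (hb : Integrable (fun z => b z ^ 2) μ)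
    (hab : Integrable (fun z => a z * b z) μ) :
    ∫ z, a z * b z ∂μ ≤ Real.sqrt (∫ z, a z ^ 2 ∂μ) * Real.sqrt (∫ z, b z ^ 2 ∂μ) := by
  apply scalar_cs _ _ _ (integral_nonneg fun z => sq_nonneg _)
    (integral_nonneg fun z => sq_nonneg _)
  intro t ht
  have h1 : ∫ z, a z * b z ∂μ ≤ ∫ z, (t * a z ^ 2 + b z ^ 2 / t)/2 ∂μ := by
    apply integral_mono hab (((ha.const_mul t).add (hb.div_const t)).div_const 2)
    intro z
    simp only [Pi.add_apply]
    have h0 : 0 ≤ (t * a z - b z)^2 / t := by positivity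
    have : (t * a z ^ 2 + b z ^ 2 / t)/2 - a z * b z = (t * a z - b z)^2 / t / 2 := by
      field_simp; ring
    linarith
  calc ∫ z, a z * b z ∂μ ≤ ∫ z, (t * a z ^ 2 + b z ^ 2 / t)/2 ∂μ := h1
    _ = (t * ∫ z, a z ^2 ∂μ + (∫ z, b z ^2 ∂μ)/t)/2 := by
        rw [integral_div]
        congr 1
        rw [integral_add (ha.const_mul t) (hb.div_const t), integral_const_mul, integral_div]

lemma integral_mul_deriv_Ioi (g g' : ℝ → ℝ)
    (hg : ∀ z ∈ Ici (0:ℝ), HasDerivAt g (g' z) z)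
    (hg2 : IntegrableOn (fun z => g z ^ 2) (Ioi (0:ℝ)))
    (hgg' : IntegrableOn (fun z => g z * g' z) (Ioi (0:ℝ))) :
    ∫ z in Ioi (0:ℝ), g z * g' z = -(g 0 ^ 2 / 2) := by
  set I := ∫ z in Ioi (0:ℝ), g z * g' z with hI
  -- FTC on [0, T]
  have hftc : ∀ T ≥ (0:ℝ), ∫ z in (0:ℝ)..T, g z * g' z = g T ^ 2 / 2 - g 0 ^ 2 / 2 := by
    intro T hT
    have hval : ∀ x ∈ uIcc (0:ℝ) T, HasDerivAt (fun z => g z ^ 2 / 2) (g x * g' x) x := by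
      intro x hx
      rw [uIcc_of_le hT] at hx
      have hx0 : x ∈ Ici (0:ℝ) := hx.1
      have h1 := ((hg x hx0).mul (hg x hx0)).div_const 2
      have h2 : (fun z => g z ^ 2 / 2) = fun z => g z * g z / 2 := by
        funext z; ring
      rw [h2]
      exact h1.congr_deriv (by ring)
    have hint : IntervalIntegrable (fun z => g z * g' z) volume 0 T := by
      rw [intervalIntegrable_iff, uIoc_of_le hT]
      exact hgg'.mono_set Ioc_subset_Ioi_self
    simpa using intervalIntegral.integral_eq_sub_of_hasDerivAt hval hint
  have htendI : Tendsto (fun T => ∫ z in (0:ℝ)..T, g z * g' z) atTop (nhds I) :=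
    intervalIntegral_tendsto_integral_Ioi 0 hgg' tendsto_id
  have htend2 : Tendsto (fun T => g T ^ 2 / 2 - g 0 ^ 2 / 2) atTop (nhds I) := by
    apply htendI.congr'
    filter_upwards [eventually_ge_atTop (0:ℝ)] with T hT
    exact hftc T hT
  have htend3 : Tendsto (fun T => g T ^ 2) atTop (nhds (2 * I + g 0 ^ 2)) := by
    have h := (htend2.const_mul 2).add_const (g 0 ^ 2)
    convert h using 2 with T
    ring
  set L := 2 * I + g 0 ^ 2 with hL
  have hLnn : 0 ≤ L := le_of_tendsto_of_tendsto' tendsto_const_nhds htend3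
    (fun T => sq_nonneg _)
  have hLz : L = 0 := by
    by_contra hne
    have hLpos : 0 < L := hLnn.lt_of_ne (Ne.symm hne)
    obtain ⟨T₀, hT₀⟩ := (htend3.eventually (eventually_ge_nhds (by linarith : L/2 < L))).exists_forall_of_atTop
    set T₁ := max T₀ 0 with hT₁
    have hsub : IntegrableOn (fun z => g z ^ 2) (Ioi T₁) :=
      hg2.mono_set (Ioi_subset_Ioi (le_max_right _ _))
    have hconst : IntegrableOn (fun _ : ℝ => L/2) (Ioi T₁) := by
      apply Integrable.mono' hsub aestronglyMeasurable_const
      rw [ae_restrict_iff' measurableSet_Ioi]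
      filter_upwards with z hz
      have : L/2 ≤ g z ^ 2 := hT₀ z (le_of_lt (lt_of_le_of_lt (le_max_left _ _) hz))
      rw [Real.norm_eq_abs, abs_of_pos (by linarith)]
      exact this
    rw [integrableOn_const_iff] at hconst
    rcases hconst with h | h
    · exact hne (by simp at h; linarith [h])
    · simp [Real.volume_Ioi] at h
  linarith [hLz]

set_option maxHeartbeats 1600000 in
/-- Core ODE estimates in the proof of Lemma 2.1: for each sine frequency
`k ∈ ℤ²` with `|k| ≥ 1`, the `L²(0,∞)` solution of `|k|² v̂ - v̂'' = f̂` with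
Robin condition `v̂'(0) + β v̂(0) = 0` obeys the stated `L²` bounds. -/
theorem stmt_17 (k : ℤ × ℤ) (hk : k ≠ 0) (β : ℝ)
    (hβ : β ≠ Real.sqrt ((k.1 : ℝ) ^ 2 + (k.2 : ℝ) ^ 2))
    (v v' v'' f : ℝ → ℝ)
    (hv : ∀ z ∈ Ici (0:ℝ), HasDerivAt v (v' z) z)
    (hv' : ∀ z ∈ Ici (0:ℝ), HasDerivAt v' (v'' z) z)
    (hode : ∀ z ∈ Ici (0:ℝ),
        (Real.sqrt ((k.1 : ℝ) ^ 2 + (k.2 : ℝ) ^ 2)) ^ 2 * v z - v'' z = f z)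
    (hbc : v' 0 + β * v 0 = 0)
    (hvL2 : IntegrableOn (fun z => (v z) ^ 2) (Ioi (0:ℝ)))
    (hv'L2 : IntegrableOn (fun z => (v' z) ^ 2) (Ioi (0:ℝ)))
    (hfL2 : IntegrableOn (fun z => (f z) ^ 2) (Ioi (0:ℝ))) :
    Real.sqrt (∫ z in Ioi (0:ℝ), (v z) ^ 2)
      ≤ (1 / (Real.sqrt ((k.1 : ℝ) ^ 2 + (k.2 : ℝ) ^ 2)) ^ 2)
        * (1 + |(Real.sqrt ((k.1 : ℝ) ^ 2 + (k.2 : ℝ) ^ 2) + β)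
              / (Real.sqrt ((k.1 : ℝ) ^ 2 + (k.2 : ℝ) ^ 2) - β)|)
        * Real.sqrt (∫ z in Ioi (0:ℝ), (f z) ^ 2)
    ∧ Real.sqrt (∫ z in Ioi (0:ℝ), (v' z) ^ 2)
      ≤ (1 / Real.sqrt ((k.1 : ℝ) ^ 2 + (k.2 : ℝ) ^ 2))
        * (1 + |(Real.sqrt ((k.1 : ℝ) ^ 2 + (k.2 : ℝ) ^ 2) + β)
              / (Real.sqrt ((k.1 : ℝ) ^ 2 + (k.2 : ℝ) ^ 2) - β)|)
        * Real.sqrt (∫ z in Ioi (0:ℝ), (f z) ^ 2) := by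
  have hksum : 0 < (k.1:ℝ)^2 + (k.2:ℝ)^2 := by
    have hne : k.1 ≠ 0 ∨ k.2 ≠ 0 := by
      by_contra h
      push_neg at h
      exact hk (Prod.ext h.1 h.2)
    rcases hne with h | h
    · have h1 : ((k.1:ℝ)) ≠ 0 := Int.cast_ne_zero.2 h
      nlinarith [sq_pos_of_ne_zero h1, sq_nonneg ((k.2:ℝ))]
    · have h1 : ((k.2:ℝ)) ≠ 0 := Int.cast_ne_zero.2 h
      nlinarith [sq_pos_of_ne_zero h1, sq_nonneg ((k.1:ℝ))]
  set c : ℝ := Real.sqrt ((k.1:ℝ)^2 + (k.2:ℝ)^2) with hcdef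
  have hc : 0 < c := Real.sqrt_pos.2 hksum
  set R : ℝ := |(c + β)/(c - β)| with hRdef
  have hRnn : 0 ≤ R := abs_nonneg _
  have hcβ : c - β ≠ 0 := sub_ne_zero.2 (Ne.symm hβ)
  -- the auxiliary functions
  set u : ℝ → ℝ := fun z => v' z + c * v z with hu_def
  set w : ℝ → ℝ := fun z => v' z - c * v z with hw_def
  -- derivatives
  have hu : ∀ z ∈ Ici (0:ℝ), HasDerivAt u (c * u z - f z) z := by
    intro z hz
    have h1 := (hv' z hz).add ((hv z hz).const_mul c)
    rw [hu_def]
    exact h1.congr_deriv (by beta_reduce; linear_combination (-1:ℝ) * hode z hz)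
  have hw : ∀ z ∈ Ici (0:ℝ), HasDerivAt w (-(c * w z) - f z) z := by
    intro z hz
    have h1 := (hv' z hz).sub ((hv z hz).const_mul c)
    rw [hw_def]
    exact h1.congr_deriv (by beta_reduce; linear_combination (-1:ℝ) * hode z hz)
  -- measurability
  have hvc : ContinuousOn v (Ioi 0) :=
    fun z hz => ((hv z (mem_Ici.2 (le_of_lt (mem_Ioi.1 hz)))).continuousAt).continuousWithinAt
  have hv'c : ContinuousOn v' (Ioi 0) :=
    fun z hz => ((hv' z (mem_Ici.2 (le_of_lt (mem_Ioi.1 hz)))).continuousAt).continuousWithinAt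
  have hvm : AEStronglyMeasurable v (volume.restrict (Ioi 0)) :=
    hvc.aestronglyMeasurable measurableSet_Ioi
  have hv'm : AEStronglyMeasurable v' (volume.restrict (Ioi 0)) :=
    hv'c.aestronglyMeasurable measurableSet_Ioi
  have hfm : AEStronglyMeasurable f (volume.restrict (Ioi 0)) := by
    have hd : AEStronglyMeasurable (fun z => c^2 * v z - deriv v' z)
        (volume.restrict (Ioi 0)) :=
      (hvm.const_mul (c^2)).sub ((measurable_deriv v').aestronglyMeasurable.restrict)
    apply hd.congr
    rw [EventuallyEq, ae_restrict_iff' measurableSet_Ioi]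
    filter_upwards with z hz
    have hdz : deriv v' z = v'' z := (hv' z (mem_Ici.2 (le_of_lt (mem_Ioi.1 hz)))).deriv
    rw [hdz]
    exact hode z (mem_Ici.2 (le_of_lt (mem_Ioi.1 hz)))
  have hum : AEStronglyMeasurable u (volume.restrict (Ioi 0)) := by
    rw [hu_def]; exact hv'm.add (hvm.const_mul c)
  have hwm : AEStronglyMeasurable w (volume.restrict (Ioi 0)) := by
    rw [hw_def]; exact hv'm.sub (hvm.const_mul c)
  -- integrability of squares
  have hbnd : IntegrableOn (fun z => 2 * v' z ^ 2 + 2 * c^2 * v z ^ 2) (Ioi (0:ℝ)) :=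
    (hv'L2.const_mul 2).add (hvL2.const_mul (2 * c^2))
  have hu2 : IntegrableOn (fun z => u z ^ 2) (Ioi (0:ℝ)) := by
    apply Integrable.mono' hbnd
    · have : (fun z => u z ^ 2) = fun z => u z * u z := by funext z; ring
      rw [this]; exact hum.mul hum
    · apply ae_of_all
      intro z
      rw [Real.norm_eq_abs, abs_of_nonneg (sq_nonneg _)]
      simp only [hu_def]
      nlinarith [sq_nonneg (v' z - c * v z)]
  have hw2 : IntegrableOn (fun z => w z ^ 2) (Ioi (0:ℝ)) := by
    apply Integrable.mono' hbnd
    · have : (fun z => w z ^ 2) = fun z => w z * w z := by funext z; ring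
      rw [this]; exact hwm.mul hwm
    · apply ae_of_all
      intro z
      rw [Real.norm_eq_abs, abs_of_nonneg (sq_nonneg _)]
      simp only [hw_def]
      nlinarith [sq_nonneg (v' z + c * v z)]
  -- integrability of products
  have hprod : ∀ (a b : ℝ → ℝ), AEStronglyMeasurable a (volume.restrict (Ioi 0)) →
      AEStronglyMeasurable b (volume.restrict (Ioi 0)) →
      IntegrableOn (fun z => a z ^ 2) (Ioi (0:ℝ)) →
      IntegrableOn (fun z => b z ^ 2) (Ioi (0:ℝ)) →
      IntegrableOn (fun z => a z * b z) (Ioi (0:ℝ)) := by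
    intro a b ham hbm ha2 hb2
    apply Integrable.mono' ((ha2.add hb2).div_const 2) (ham.mul hbm)
    apply ae_of_all
    intro z
    simp only [Real.norm_eq_abs, Pi.mul_apply, Pi.add_apply, abs_mul]
    nlinarith [sq_nonneg (|a z| - |b z|), sq_abs (a z), sq_abs (b z),
      abs_nonneg (a z), abs_nonneg (b z)]
  have hfu : IntegrableOn (fun z => f z * u z) (Ioi (0:ℝ)) := hprod f u hfm hum hfL2 hu2
  have hfw : IntegrableOn (fun z => f z * w z) (Ioi (0:ℝ)) := hprod f w hfm hwm hfL2 hw2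
  have huw : IntegrableOn (fun z => u z * w z) (Ioi (0:ℝ)) := hprod u w hum hwm hu2 hw2
  -- abbreviations
  set F2 : ℝ := ∫ z in Ioi (0:ℝ), f z ^ 2 with hF2
  set U2 : ℝ := ∫ z in Ioi (0:ℝ), u z ^ 2 with hU2def
  set W2 : ℝ := ∫ z in Ioi (0:ℝ), w z ^ 2 with hW2def
  set Ifu : ℝ := ∫ z in Ioi (0:ℝ), f z * u z with hIfu
  set Ifw : ℝ := ∫ z in Ioi (0:ℝ), f z * w z with hIfw
  set Iuw : ℝ := ∫ z in Ioi (0:ℝ), u z * w z with hIuw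
  have hF2nn : 0 ≤ F2 := integral_nonneg fun z => sq_nonneg _
  have hU2nn : 0 ≤ U2 := integral_nonneg fun z => sq_nonneg _
  have hW2nn : 0 ≤ W2 := integral_nonneg fun z => sq_nonneg _
  have hcne : c ≠ 0 := ne_of_gt hc
  clear_value u w R F2 U2 W2 Ifu Ifw Iuw
  have hU2nn' := hU2nn
  -- energy identity for u
  have huu' : IntegrableOn (fun z => u z * (c * u z - f z)) (Ioi (0:ℝ)) := by
    have : (fun z => u z * (c * u z - f z)) = fun z => c * u z ^ 2 - f z * u z := by
      funext z; ring
    rw [this]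
    exact (hu2.const_mul c).sub hfu
  have hIu : c * U2 - Ifu = -(u 0 ^ 2 / 2) := by
    have h1 := integral_mul_deriv_Ioi u (fun z => c * u z - f z) hu hu2 huu'
    rw [show (fun z => u z * (c * u z - f z)) = fun z => c * u z ^ 2 - f z * u z
      from funext fun z => by ring] at h1
    rw [integral_sub (hu2.const_mul c) hfu, integral_const_mul, ← hU2def, ← hIfu] at h1
    exact h1
  have hww' : IntegrableOn (fun z => w z * (-(c * w z) - f z)) (Ioi (0:ℝ)) := by
    have : (fun z => w z * (-(c * w z) - f z)) = fun z => (-c) * w z ^ 2 - f z * w z := by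
      funext z; ring
    rw [this]
    exact (hw2.const_mul (-c)).sub hfw
  have hIw : -c * W2 - Ifw = -(w 0 ^ 2 / 2) := by
    have h1 := integral_mul_deriv_Ioi w (fun z => -(c * w z) - f z) hw hw2 hww'
    rw [show (fun z => w z * (-(c * w z) - f z)) = fun z => (-c) * w z ^ 2 - f z * w z
      from funext fun z => by ring] at h1
    rw [integral_sub (hw2.const_mul (-c)) hfw, integral_const_mul, ← hW2def, ← hIfw] at h1
    exact h1
  -- AM-GM integral bounds
  have hfu_bd : 2 * c * Ifu ≤ F2 + c^2 * U2 := by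
    have h1 : ∫ z in Ioi (0:ℝ), 2 * c * (f z * u z)
        ≤ ∫ z in Ioi (0:ℝ), (f z ^ 2 + c^2 * u z ^ 2) := by
      apply integral_mono (hfu.const_mul (2*c)) (hfL2.add (hu2.const_mul (c^2)))
      intro z
      simp only [Pi.add_apply]
      nlinarith [sq_nonneg (f z - c * u z)]
    rw [integral_const_mul, integral_add hfL2 (hu2.const_mul (c^2)), integral_const_mul,
      ← hF2, ← hU2def, ← hIfu] at h1
    exact h1
  have hfw_bd : -(2 * c * Ifw) ≤ F2 + c^2 * W2 := by
    have h1 : ∫ z in Ioi (0:ℝ), -(2 * c) * (f z * w z)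
        ≤ ∫ z in Ioi (0:ℝ), (f z ^ 2 + c^2 * w z ^ 2) := by
      apply integral_mono (hfw.const_mul (-(2*c))) (hfL2.add (hw2.const_mul (c^2)))
      intro z
      simp only [Pi.add_apply]
      nlinarith [sq_nonneg (f z + c * w z)]
    rw [integral_const_mul, integral_add hfL2 (hw2.const_mul (c^2)), integral_const_mul,
      ← hF2, ← hW2def, ← hIfw] at h1
    linarith
  -- consequences: bounds on U2, u 0, W2
  have hc2 : (0:ℝ) < c^2 := pow_pos hc 2
  have hu_key : c^2 * U2 + c * u 0 ^ 2 ≤ F2 := by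
    have hIfu_eq : Ifu = c * U2 + u 0 ^ 2 / 2 := by linarith [hIu]
    have h2 : 2 * c * Ifu = 2 * c * (c * U2 + u 0 ^ 2 / 2) := by rw [hIfu_eq]
    linarith [hfu_bd, h2]
  have hU2b : U2 ≤ F2 / c^2 := by
    rw [le_div_iff₀ hc2]
    linarith [hu_key, mul_nonneg hc.le (sq_nonneg (u 0))]
  have hu0 : u 0 ^ 2 ≤ F2 / c := by
    rw [le_div_iff₀ hc]
    linarith [hu_key, mul_nonneg hc2.le hU2nn]
  -- boundary relation
  have hv'0 : v' 0 = -(β * v 0) := by linarith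
  have hw0sq : w 0 ^ 2 = R^2 * u 0 ^ 2 := by
    have hu0e : u 0 = (c - β) * v 0 := by simp only [hu_def]; rw [hv'0]; ring
    have hw0e : w 0 = -((c + β) * v 0) := by simp only [hw_def]; rw [hv'0]; ring
    rw [hRdef, sq_abs, div_pow, hu0e, hw0e]
    field_simp
  have hW2b : W2 ≤ (1 + R^2) * F2 / c^2 := by
    have h1 : c * W2 + Ifw = w 0 ^2 / 2 := by linarith
    have h2 : c^2 * W2 ≤ F2 + c * w 0 ^ 2 := by
      have h2a : 2 * c * Ifw = 2 * c * (w 0 ^2 / 2 - c * W2) := by rw [show Ifw = w 0 ^2/2 - c*W2 by linarith]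
      linarith [hfw_bd, h2a]
    have h4 : c * u 0 ^ 2 ≤ F2 := by
      have := (le_div_iff₀ hc).1 hu0
      linarith
    have h3 : c * w 0 ^ 2 ≤ R^2 * F2 := by
      rw [hw0sq]
      calc c * (R^2 * u 0 ^ 2) = R^2 * (c * u 0 ^ 2) := by ring
        _ ≤ R^2 * F2 := mul_le_mul_of_nonneg_left h4 (sq_nonneg R)
    rw [le_div_iff₀ hc2]
    linarith [h2, h3]
  -- sqrt bounds
  have hSU : Real.sqrt U2 ≤ Real.sqrt F2 / c := by
    have h1 : Real.sqrt U2 ≤ Real.sqrt (F2 / c^2) := Real.sqrt_le_sqrt hU2b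
    rwa [Real.sqrt_div hF2nn, Real.sqrt_sq hc.le] at h1
  have hSW : Real.sqrt W2 ≤ (1 + R) * Real.sqrt F2 / c := by
    have h1 : Real.sqrt W2 ≤ Real.sqrt ((1 + R^2) * F2 / c^2) := Real.sqrt_le_sqrt hW2b
    rw [Real.sqrt_div (mul_nonneg (by positivity) hF2nn), Real.sqrt_sq hc.le,
      Real.sqrt_mul (by positivity) F2] at h1
    have h2 : Real.sqrt (1 + R^2) ≤ 1 + R := by
      have h3 : Real.sqrt (1 + R^2) ≤ Real.sqrt ((1 + R)^2) :=
        Real.sqrt_le_sqrt (by nlinarith)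
      rwa [Real.sqrt_sq (by linarith)] at h3
    calc Real.sqrt W2 ≤ Real.sqrt (1 + R^2) * Real.sqrt F2 / c := h1
      _ ≤ (1 + R) * Real.sqrt F2 / c := by gcongr
  -- Cauchy-Schwarz for u, w
  have hcs1 : Iuw ≤ Real.sqrt U2 * Real.sqrt W2 := by
    have h0 := integral_cs u w (volume.restrict (Ioi 0)) hu2 hw2 huw
    rwa [← hIuw, ← hU2def, ← hW2def] at h0
  have hcs2 : -Iuw ≤ Real.sqrt U2 * Real.sqrt W2 := by
    have h1 := integral_cs u (fun z => -w z) (volume.restrict (Ioi 0)) hu2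
      (by simpa [IntegrableOn] using hw2) (by
        have : (fun z => u z * -w z) = fun z => -(u z * w z) := by funext z; ring
        rw [this]; exact huw.neg)
    have h2 : (∫ z in Ioi (0:ℝ), u z * -w z) = -Iuw := by
      rw [show (fun z => u z * -w z) = fun z => -(u z * w z) from funext fun z => by ring,
        integral_neg, ← hIuw]
    have h3 : (∫ z in Ioi (0:ℝ), (-w z) ^ 2) = W2 := by
      rw [show (fun z => (-w z) ^ 2) = fun z => w z ^ 2 from funext fun z => by ring]
      exact hW2def.symm
    rw [h2, h3, ← hU2def] at h1
    exact h1
  -- conclusion, part 1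
  set S : ℝ := Real.sqrt F2 with hS
  have hSnn : 0 ≤ S := Real.sqrt_nonneg _
  have hsum : Real.sqrt U2 + Real.sqrt W2 ≤ (2 + R) * S / c := by
    have e : (2 + R) * S / c = S / c + (1 + R) * S / c := by field_simp; ring
    rw [e]
    exact add_le_add hSU hSW
  constructor
  · -- bound for v
    have hv2eq : (fun z => v z ^ 2) = fun z => (u z - w z) ^ 2 / (4 * c^2) := by
      funext z
      simp only [hu_def, hw_def]
      field_simp
      ring
    have hA : IntegrableOn (fun z => u z ^2 - 2*(u z * w z)) (Ioi (0:ℝ)) :=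
      hu2.sub (huw.const_mul 2)
    have hdiff : IntegrableOn (fun z => (u z - w z)^2) (Ioi (0:ℝ)) := by
      rw [show (fun z => (u z - w z)^2) = fun z => u z ^2 - 2*(u z * w z) + w z ^2
        from funext fun z => by ring]
      exact hA.add hw2
    have hIdiff : (∫ z in Ioi (0:ℝ), (u z - w z)^2) = U2 - 2*Iuw + W2 := by
      rw [show (fun z => (u z - w z)^2) = fun z => u z ^2 - 2*(u z * w z) + w z ^2
        from funext fun z => by ring]
      rw [integral_add hA hw2,
        integral_sub hu2 (huw.const_mul 2), integral_const_mul,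
        ← hU2def, ← hW2def, ← hIuw]
    have hIdiff_le : (∫ z in Ioi (0:ℝ), (u z - w z)^2)
        ≤ (Real.sqrt U2 + Real.sqrt W2)^2 := by
      rw [hIdiff]
      have e1 : Real.sqrt U2 ^ 2 = U2 := Real.sq_sqrt hU2nn
      have e2 : Real.sqrt W2 ^ 2 = W2 := Real.sq_sqrt hW2nn
      linarith [hcs2, e1, e2, sq_nonneg (Real.sqrt U2 + Real.sqrt W2)]
    have hmain : Real.sqrt (∫ z in Ioi (0:ℝ), v z ^ 2)
        ≤ (Real.sqrt U2 + Real.sqrt W2) / (2*c) := by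
      rw [hv2eq, integral_div, show (4 * c^2 : ℝ) = (2*c)^2 by ring,
        Real.sqrt_div (integral_nonneg fun z => sq_nonneg _), Real.sqrt_sq (by linarith)]
      gcongr
      calc Real.sqrt (∫ z in Ioi (0:ℝ), (u z - w z)^2)
          ≤ Real.sqrt ((Real.sqrt U2 + Real.sqrt W2)^2) := Real.sqrt_le_sqrt hIdiff_le
        _ = Real.sqrt U2 + Real.sqrt W2 := Real.sqrt_sq (by positivity)
    calc Real.sqrt (∫ z in Ioi (0:ℝ), v z ^ 2)
        ≤ (Real.sqrt U2 + Real.sqrt W2) / (2*c) := hmain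
      _ ≤ ((2 + R) * S / c) / (2*c) := by gcongr
      _ = (2 + R)/2 * S / c^2 := by rw [div_div]; ring
      _ ≤ (1 + R) * S / c^2 := by gcongr ?_ * S / c^2; linarith
      _ = 1 / c^2 * (1 + R) * S := by ring
  · -- bound for v'
    have hv2eq : (fun z => v' z ^ 2) = fun z => (u z + w z) ^ 2 / 4 := by
      funext z
      simp only [hu_def, hw_def]
      field_simp
      ring
    have hB : IntegrableOn (fun z => u z ^2 + 2*(u z * w z)) (Ioi (0:ℝ)) :=
      hu2.add (huw.const_mul 2)
    have hsumint : IntegrableOn (fun z => (u z + w z)^2) (Ioi (0:ℝ)) := by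
      rw [show (fun z => (u z + w z)^2) = fun z => u z ^2 + 2*(u z * w z) + w z ^2
        from funext fun z => by ring]
      exact hB.add hw2
    have hIsum : (∫ z in Ioi (0:ℝ), (u z + w z)^2) = U2 + 2*Iuw + W2 := by
      rw [show (fun z => (u z + w z)^2) = fun z => u z ^2 + 2*(u z * w z) + w z ^2
        from funext fun z => by ring]
      rw [integral_add hB hw2,
        integral_add hu2 (huw.const_mul 2), integral_const_mul,
        ← hU2def, ← hW2def, ← hIuw]
    have hIsum_le : (∫ z in Ioi (0:ℝ), (u z + w z)^2)
        ≤ (Real.sqrt U2 + Real.sqrt W2)^2 := by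
      rw [hIsum]
      have e1 : Real.sqrt U2 ^ 2 = U2 := Real.sq_sqrt hU2nn
      have e2 : Real.sqrt W2 ^ 2 = W2 := Real.sq_sqrt hW2nn
      linarith [hcs1, e1, e2, sq_nonneg (Real.sqrt U2 + Real.sqrt W2)]
    have hmain : Real.sqrt (∫ z in Ioi (0:ℝ), v' z ^ 2)
        ≤ (Real.sqrt U2 + Real.sqrt W2) / 2 := by
      rw [hv2eq, integral_div, show (4 : ℝ) = 2^2 by norm_num,
        Real.sqrt_div (integral_nonneg fun z => sq_nonneg _), Real.sqrt_sq (by norm_num)]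
      gcongr
      calc Real.sqrt (∫ z in Ioi (0:ℝ), (u z + w z)^2)
          ≤ Real.sqrt ((Real.sqrt U2 + Real.sqrt W2)^2) := Real.sqrt_le_sqrt hIsum_le
        _ = Real.sqrt U2 + Real.sqrt W2 := Real.sqrt_sq (by positivity)
    calc Real.sqrt (∫ z in Ioi (0:ℝ), v' z ^ 2)
        ≤ (Real.sqrt U2 + Real.sqrt W2) / 2 := hmain
      _ ≤ ((2 + R) * S / c) / 2 := by gcongr
      _ = (2 + R)/2 * S / c := by ring
      _ ≤ (1 + R) * S / c := by gcongr ?_ * S / c; linarith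
      _ = 1 / c * (1 + R) * S := by ring
end
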